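/- arXiv:2201.09350 — 9 statements merged into one kernel-verified Lean document; each statement's English description precedes it below -/
import Mathlib

section
/- If the null p-values are i.i.d. uniform on [0,1] and independent of the non-null p-values, then the Benjamini-Hochberg procedure at level α ∈ (0,1) has false discovery rate exactly equal to α·K₀/K, where K₀ is the number of true nulls and K the total number of hypotheses. -/
open MeasureTheory ProbabilityTheory Finset
open scoped ENNReal Classical

noncomputable section

/-- The `i`-th smallest value (0-indexed) among `p 0, …, p (K-1)`. -/
def sortAsc {K : ℕ} (p : Fin K → ℝ) : Fin K → ℝ := p ∘ Tuple.sort p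

/-- The `i`-th largest value (0-indexed) among `e 0, …, e (K-1)`. -/
def sortDesc {K : ℕ} (e : Fin K → ℝ) : Fin K → ℝ := e ∘ Tuple.sort (fun j => -e j)

/-- `k* = max {k : K p_(k) / k ≤ α}` (with `max ∅ = 0`), the BH rejection count. -/
def bhCount (K : ℕ) (α : ℝ) (p : Fin K → ℝ) : ℕ :=
  (univ.filter (fun i : Fin K => (K : ℝ) * sortAsc p i / (i.1 + 1) ≤ α)).sup
    (fun i => i.1 + 1)

/-- The BH procedure rejects the hypotheses carrying the `k*` smallest p-values. -/
def bhRejects (K : ℕ) (α : ℝ) (p : Fin K → ℝ) : Finset (Fin K) :=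
  univ.filter (fun k => ∃ i : Fin K, i.1 + 1 ≤ bhCount K α p ∧ p k ≤ sortAsc p i)

/-- `k* = max {k : k e_[k] / K ≥ 1/α}`, the e-BH rejection count. -/
def ebhCount (K : ℕ) (α : ℝ) (e : Fin K → ℝ) : ℕ :=
  (univ.filter (fun i : Fin K => 1 / α ≤ (i.1 + 1) * sortDesc e i / K)).sup
    (fun i => i.1 + 1)

/-- The e-BH procedure rejects the hypotheses carrying the `k*` largest e-values. -/
def ebhRejects (K : ℕ) (α : ℝ) (e : Fin K → ℝ) : Finset (Fin K) :=
  univ.filter (fun k => ∃ i : Fin K, i.1 + 1 ≤ ebhCount K α e ∧ sortDesc e i ≤ e k)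

/-- Simes function `S_K(p) = min_k (K/k) p_(k)`. -/
def simes (K : ℕ) (p : Fin K → ℝ) : ℝ := ⨅ i : Fin K, (K : ℝ) / (i.1 + 1) * sortAsc p i

/-- Harmonic number `ℓ_K = ∑_{k=1}^K 1/k`. -/
def harm (K : ℕ) : ℝ := ∑ k ∈ Finset.Icc 1 K, (1 : ℝ) / k

/-- An increasing (upper) subset of `ℝ^K`. -/
def IncreasingSet {K : ℕ} (A : Set (Fin K → ℝ)) : Prop := ∀ x ∈ A, ∀ y, x ≤ y → y ∈ A

/-- Positive regression dependence on the subset `N` of nulls. -/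
def PRDS {Ω : Type*} [MeasurableSpace Ω] (μ : Measure Ω) {K : ℕ}
    (P : Fin K → Ω → ℝ) (N : Finset (Fin K)) : Prop :=
  ∀ k ∈ N, ∀ A : Set (Fin K → ℝ), MeasurableSet A → IncreasingSet A →
    Monotone (fun x : ℝ => μ[|{ω | P k ω ≤ x}] {ω | (fun j => P j ω) ∈ A})

/-- False discovery proportion of a rejection set `D` w.r.t. the null set `N`. -/
def fdp {K : ℕ} (D N : Finset (Fin K)) : ℝ := ((D ∩ N).card : ℝ) / (max D.card 1 : ℕ)

end

/-! Let `R` be the number of BH rejections and `R_k` the number obtained after replacing `p_k`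
by `0`. If `p_k ≤ α R_k / K` then `R = R_k`, and conversely `p_k ≤ α R / K` forces
`p_k ≤ α R_k / K`; hence the false discovery proportion is
`∑_{k ∈ 𝒩} 1{p_k ≤ α R_k / K} / R_k`. For a null `k`, `R_k` is a function of the other
p-values, hence independent of the uniform `P_k`, so each summand has expectation
`E[(α R_k / K) / R_k] = α / K`. -/

namespace ProbabilityTheory

variable {Ω β γ δ : Type*} [MeasurableSpace Ω] [MeasurableSpace β] [MeasurableSpace γ]
  [MeasurableSpace δ] {μ : Measure Ω} [IsFiniteMeasure μ]

theorem IndepFun.indepFun_prodMk {X : Ω → β} {Y : Ω → γ} {Z : Ω → δ} (hX : Measurable X)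
    (hY : Measurable Y) (hZ : Measurable Z) (hXY : IndepFun X Y μ)
    (hXY_Z : IndepFun (fun ω => (X ω, Y ω)) Z μ) :
    IndepFun X (fun ω => (Y ω, Z ω)) μ := by
  have hYZ : IndepFun Y Z μ := hXY_Z.comp measurable_snd measurable_id
  rw [indepFun_iff_map_prod_eq_prod_map_map hX.aemeasurable (hY.prodMk hZ).aemeasurable,
    hYZ.map_prod_eq_prod_map_map hY.aemeasurable hZ.aemeasurable, ← Measure.prodAssoc_prod,
    ← hXY.map_prod_eq_prod_map_map hX.aemeasurable hY.aemeasurable,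
    ← hXY_Z.map_prod_eq_prod_map_map (hX.prodMk hY).aemeasurable hZ.aemeasurable,
    Measure.map_map MeasurableEquiv.prodAssoc.measurable ((hX.prodMk hY).prodMk hZ)]
  rfl

theorem integral_ite_le_of_indepFun_uniform {U : Ω → ℝ} {V : Ω → β} (hU : Measurable U)
    (hV : Measurable V) (hUV : IndepFun U V μ)
    (hU_unif : μ.map U = volume.restrict (Set.Icc 0 1)) {f g : β → ℝ} (hf : Measurable f)
    (hg : Measurable g) (hf01 : ∀ v, f v ∈ Set.Icc 0 1) {C : ℝ} (hgC : ∀ v, |g v| ≤ C) :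
    ∫ ω, (if U ω ≤ f (V ω) then g (V ω) else 0) ∂μ = ∫ ω, f (V ω) * g (V ω) ∂μ := by
  set F : ℝ × β → ℝ := fun z => if z.1 ≤ f z.2 then g z.2 else 0
  have hF : Measurable F := Measurable.ite
    (measurableSet_le measurable_fst (hf.comp measurable_snd)) (hg.comp measurable_snd)
    measurable_const
  have hF_int : Integrable F ((μ.map U).prod (μ.map V)) := by
    refine Integrable.of_bound hF.aestronglyMeasurable C (ae_of_all _ fun z => ?_)
    simp only [F, Real.norm_eq_abs]
    split_ifs
    · exact hgC _
    · simpa using (abs_nonneg _).trans (hgC z.2)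
  have h_inner (v : β) : ∫ u, F (u, v) ∂(μ.map U) = f v * g v := by
    have : (fun u => F (u, v)) = (Set.Iic (f v)).indicator fun _ => g v := by
      ext u
      simp [F, Set.indicator_apply]
    have hIcc : Set.Iic (f v) ∩ Set.Icc 0 1 = Set.Icc 0 (f v) := by
      ext u
      simp only [Set.mem_inter_iff, Set.mem_Iic, Set.mem_Icc]
      constructor
      · exact fun ⟨hu, hu0, _⟩ => ⟨hu0, hu⟩
      · exact fun ⟨hu0, hu⟩ => ⟨hu, hu0, hu.trans (hf01 v).2⟩
    rw [this, integral_indicator_const _ measurableSet_Iic, hU_unif, measureReal_def,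
      Measure.restrict_apply measurableSet_Iic, hIcc, Real.volume_Icc,
      ENNReal.toReal_ofReal (by linarith [(hf01 v).1]), sub_zero, smul_eq_mul]
  calc ∫ ω, F (U ω, V ω) ∂μ = ∫ z, F z ∂(μ.map fun ω => (U ω, V ω)) :=
        (integral_map (hU.prodMk hV).aemeasurable hF.aestronglyMeasurable).symm
    _ = ∫ v, ∫ u, F (u, v) ∂(μ.map U) ∂(μ.map V) := by
        rw [hUV.map_prod_eq_prod_map_map hU.aemeasurable hV.aemeasurable,
          integral_prod_symm F hF_int]
    _ = ∫ v, f v * g v ∂(μ.map V) := by simp_rw [h_inner]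
    _ = ∫ ω, f (V ω) * g (V ω) ∂μ :=
        integral_map hV.aemeasurable (hf.mul hg).aestronglyMeasurable

end ProbabilityTheory

namespace BH

variable {K : ℕ} {α : ℝ}

noncomputable def countLE (p : Fin K → ℝ) (t : ℝ) : ℕ := #{j | p j ≤ t}

theorem countLE_mono (p : Fin K → ℝ) : Monotone (countLE p) :=
  fun _ _ hst => card_le_card <| monotone_filter_right _ fun _ _ hj => hj.trans hst

theorem countLE_antitone (t : ℝ) : Antitone fun p : Fin K → ℝ => countLE p t :=
  fun _ _ hpq => card_le_card <| monotone_filter_right _ fun j _ hj => (hpq j).trans hj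

theorem countLE_le (p : Fin K → ℝ) (t : ℝ) : countLE p t ≤ K :=
  (card_filter_le _ _).trans_eq (card_fin K)

theorem sortAsc_le_iff_lt_countLE (p : Fin K → ℝ) (i : Fin K) (t : ℝ) :
    sortAsc p i ≤ t ↔ i.1 < countLE p t := by
  rw [sortAsc, ← Tuple.lt_card_le_iff_apply_le_of_monotone (Tuple.monotone_sort p), countLE]
  congr! 1
  exact card_equiv (Tuple.sort p) (by simp)

theorem bhCount_eq_sup_countLE (hK : 0 < K) (p : Fin K → ℝ) :
    bhCount K α p =
      (univ.filter fun i : Fin K => i.1 + 1 ≤ countLE p (α * (i.1 + 1) / K)).sup (·.1 + 1) := by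
  have hK' : (0 : ℝ) < K := by exact_mod_cast hK
  unfold bhCount
  congr! 2 with i
  rw [div_le_iff₀ (by positivity), ← Nat.lt_iff_add_one_le, ← sortAsc_le_iff_lt_countLE,
    le_div_iff₀ hK', mul_comm (K : ℝ)]

theorem bhCount_le (p : Fin K → ℝ) : bhCount K α p ≤ K :=
  Finset.sup_le fun i _ => i.isLt

theorem le_bhCount (hK : 0 < K) {p : Fin K → ℝ} {r : ℕ} (hrK : r ≤ K)
    (hr : r ≤ countLE p (α * r / K)) : r ≤ bhCount K α p := by
  rcases r with _ | r
  · exact Nat.zero_le _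
  rw [bhCount_eq_sup_countLE hK]
  have hmem : (⟨r, hrK⟩ : Fin K) ∈ univ.filter fun i : Fin K =>
      i.1 + 1 ≤ countLE p (α * (i.1 + 1) / K) :=
    mem_filter.2 ⟨mem_univ _, by exact_mod_cast hr⟩
  exact le_sup (f := fun i : Fin K => i.1 + 1) hmem

theorem bhCount_le_countLE (hK : 0 < K) (p : Fin K → ℝ) :
    bhCount K α p ≤ countLE p (α * bhCount K α p / K) := by
  rw [bhCount_eq_sup_countLE hK]
  set S := univ.filter fun i : Fin K => i.1 + 1 ≤ countLE p (α * (i.1 + 1) / K)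
  obtain hS | hS := S.eq_empty_or_nonempty
  · simp [hS]
  obtain ⟨i, hi, hsup⟩ := exists_mem_eq_sup S hS (·.1 + 1)
  rw [hsup]
  exact_mod_cast (mem_filter.1 hi).2

theorem countLE_bhCount (hK : 0 < K) (hα : 0 ≤ α) (p : Fin K → ℝ) :
    countLE p (α * bhCount K α p / K) = bhCount K α p := by
  refine le_antisymm (le_bhCount hK (countLE_le _ _) (countLE_mono p ?_)) (bhCount_le_countLE hK p)
  gcongr
  exact_mod_cast bhCount_le_countLE hK p

theorem bhRejects_eq_filter (hK : 0 < K) (hα : 0 ≤ α) (p : Fin K → ℝ) :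
    bhRejects K α p = univ.filter fun k => p k ≤ α * bhCount K α p / K := by
  set t := α * bhCount K α p / K
  have hcount : countLE p t = bhCount K α p := countLE_bhCount hK hα p
  ext k
  simp only [bhRejects, mem_filter, mem_univ, true_and]
  constructor
  · rintro ⟨i, hi, hki⟩
    exact hki.trans ((sortAsc_le_iff_lt_countLE p i t).2 (by omega))
  · intro hk
    obtain ⟨r, hr⟩ : ∃ r, bhCount K α p = r + 1 :=
      Nat.exists_eq_add_one.2 (hcount ▸ card_pos.2 ⟨k, by simpa using hk⟩)
    have hrK : r < K := by have := bhCount_le (α := α) p; omega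
    refine ⟨⟨r, hrK⟩, hr.ge, ?_⟩
    by_contra! hlt
    have hr_lt : r < countLE p (sortAsc p ⟨r, hrK⟩) :=
      (sortAsc_le_iff_lt_countLE p ⟨r, hrK⟩ _).1 le_rfl
    have hsort : sortAsc p ⟨r, hrK⟩ ≤ t :=
      (sortAsc_le_iff_lt_countLE p ⟨r, hrK⟩ t).2 (by simp; omega)
    have hcard : countLE p (sortAsc p ⟨r, hrK⟩) + 1 ≤ countLE p t := by
      unfold countLE
      rw [← card_insert_of_notMem (by simpa using hlt)]
      exact card_le_card (insert_subset (by simpa using hk)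
        (monotone_filter_right _ fun j _ hj => hj.trans hsort))
    omega

theorem card_bhRejects (hK : 0 < K) (hα : 0 ≤ α) (p : Fin K → ℝ) :
    #(bhRejects K α p) = bhCount K α p := by
  rw [bhRejects_eq_filter hK hα]
  exact countLE_bhCount hK hα p

theorem bhCount_antitone (hK : 0 < K) : Antitone (bhCount K α) := by
  intro p q hpq
  rw [bhCount_eq_sup_countLE hK, bhCount_eq_sup_countLE hK]
  exact sup_mono (monotone_filter_right _ fun i _ hi => hi.trans (countLE_antitone _ hpq))

theorem one_le_bhCount (hK : 0 < K) (hα : 0 ≤ α) {p : Fin K → ℝ} {k : Fin K} (hk : p k ≤ 0) :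
    1 ≤ bhCount K α p :=
  le_bhCount hK hK (card_pos.2 ⟨k, by simpa using hk.trans (by positivity)⟩)

theorem countLE_update_zero (p : Fin K → ℝ) (k : Fin K) {t : ℝ} (ht : 0 ≤ t) (hk : p k ≤ t) :
    countLE (Function.update p k 0) t = countLE p t := by
  unfold countLE
  congr 1
  ext j
  rcases eq_or_ne j k with rfl | hj <;> simp [*]

theorem bhCount_update_zero (hK : 0 < K) (hα : 0 ≤ α) {p : Fin K → ℝ} {k : Fin K}
    (h0 : 0 ≤ p k) (hk : p k ≤ α * bhCount K α (Function.update p k 0) / K) :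
    bhCount K α p = bhCount K α (Function.update p k 0) := by
  refine le_antisymm (bhCount_antitone hK (update_le_self_iff.2 h0))
    (le_bhCount hK (bhCount_le _) ?_)
  rw [← countLE_update_zero p k (by positivity) hk]
  exact bhCount_le_countLE hK _

noncomputable def fdpSummand (K : ℕ) (α : ℝ) (p : Fin K → ℝ) (k : Fin K) : ℝ :=
  if p k ≤ α * bhCount K α (Function.update p k 0) / K then
    (bhCount K α (Function.update p k 0) : ℝ)⁻¹ else 0

theorem fdp_bhRejects_eq_sum_fdpSummand (hK : 0 < K) (hα : 0 ≤ α) {p : Fin K → ℝ}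
    {N : Finset (Fin K)} (hN : ∀ k ∈ N, 0 ≤ p k) :
    fdp (bhRejects K α p) N = ∑ k ∈ N, fdpSummand K α p k := by
  rw [fdp, card_bhRejects hK hα, bhRejects_eq_filter hK hα, filter_inter, univ_inter,
    card_filter, Nat.cast_sum, sum_div]
  set R := bhCount K α p
  refine sum_congr rfl fun k hk => ?_
  set Rk := bhCount K α (Function.update p k 0)
  have hRk : R ≤ Rk := bhCount_antitone hK (update_le_self_iff.2 (hN k hk))
  by_cases h : p k ≤ α * R / K
  · have h' : p k ≤ α * Rk / K := h.trans (by gcongr)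
    have hR : R = Rk := bhCount_update_zero hK hα (hN k hk) h'
    have h1 : 1 ≤ Rk := one_le_bhCount (k := k) hK hα (by simp)
    rw [fdpSummand, if_pos h, if_pos h', hR, max_eq_left h1, Nat.cast_one, one_div]
  · have h' : ¬ p k ≤ α * Rk / K := by
      intro h'
      have hR : R = Rk := bhCount_update_zero hK hα (hN k hk) h'
      exact h (hR ▸ h')
    rw [fdpSummand, if_neg h, if_neg h', Nat.cast_zero, zero_div]

theorem measurable_countLE (t : ℝ) : Measurable fun p : Fin K → ℝ => countLE p t := by
  simp_rw [countLE, card_filter]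
  exact Finset.measurable_sum _ fun j _ =>
    Measurable.ite (measurableSet_le (measurable_pi_apply j) measurable_const)
      measurable_const measurable_const

theorem measurable_bhCount (hK : 0 < K) : Measurable (bhCount K α) := by
  have : bhCount K α = (fun n : Fin K → ℕ =>
      (univ.filter fun i : Fin K => i.1 + 1 ≤ n i).sup (·.1 + 1)) ∘
      fun p i => countLE p (α * (i.1 + 1) / K) :=
    funext (bhCount_eq_sup_countLE hK)
  rw [this]
  exact (measurable_of_countable _).comp (measurable_pi_lambda _ fun i => measurable_countLE _)

theorem measurable_fdpSummand (hK : 0 < K) (k : Fin K) :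
    Measurable fun p => fdpSummand K α p k := by
  have hR : Measurable fun p : Fin K → ℝ => (bhCount K α (Function.update p k 0) : ℝ) :=
    measurable_from_nat.comp ((measurable_bhCount hK).comp (measurable_update_left))
  exact Measurable.ite (measurableSet_le (measurable_pi_apply k)
    ((hR.const_mul α).div_const _)) hR.inv measurable_const

theorem abs_fdpSummand_le_one (p : Fin K → ℝ) (k : Fin K) : |fdpSummand K α p k| ≤ 1 := by
  unfold fdpSummand
  split_ifs <;> simp [Nat.cast_inv_le_one]

section Probability

variable {Ω : Type*} [MeasurableSpace Ω] {μ : Measure Ω} {P : Fin K → Ω → ℝ}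
  {N : Finset (Fin K)}

theorem integrable_fdpSummand [IsFiniteMeasure μ] (hK : 0 < K) (hP : ∀ k, Measurable (P k))
    (k : Fin K) : Integrable (fun ω => fdpSummand K α (fun j => P j ω) k) μ :=
  .of_bound ((measurable_fdpSummand hK k).comp (measurable_pi_lambda _ hP)).aestronglyMeasurable
    1 (ae_of_all _ fun _ => abs_fdpSummand_le_one _ k)

theorem indepFun_update_zero [IsFiniteMeasure μ] (hP : ∀ k, Measurable (P k))
    (h_iid : iIndepFun (fun k : {k // k ∈ N} => P k.1) μ)
    (h_block : IndepFun (fun ω => fun k : {k // k ∈ N} => P k.1 ω)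
      (fun ω => fun k : {k // k ∉ N} => P k.1 ω) μ) {k : Fin K} (hk : k ∈ N) :
    IndepFun (P k) (fun ω => Function.update (fun j => P j ω) k 0) μ := by
  set S : Finset {j // j ∈ N} := {⟨k, hk⟩}
  have h_split := h_iid.indepFun_finset S Sᶜ disjoint_compl_right fun j => hP j
  have h_split_block := h_block.comp
    (φ := fun x : {j // j ∈ N} → ℝ => (fun i : S => x i, fun i : (Sᶜ : Finset _) => x i))
    (by fun_prop) measurable_id
  have h := h_split.indepFun_prodMk (by fun_prop) (by fun_prop) (by fun_prop) h_split_block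
  let G : ((Sᶜ : Finset _) → ℝ) × ({j // j ∉ N} → ℝ) → Fin K → ℝ := fun z j =>
    if hjk : j = k then 0
    else if hj : j ∈ N then z.1 ⟨⟨j, hj⟩, by simp [S, hjk]⟩ else z.2 ⟨j, hj⟩
  have hG : Measurable G := by
    refine measurable_pi_lambda _ fun j => ?_
    by_cases hjk : j = k
    · simp only [G, hjk, dite_true]; exact measurable_const
    by_cases hj : j ∈ N
    · simp only [G, hjk, hj, dite_true, dite_false]; fun_prop
    · simp only [G, hjk, hj, dite_false]; fun_prop
  convert h.comp (measurable_pi_apply ⟨⟨k, hk⟩, mem_singleton_self _⟩) hG using 1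
  · rfl
  funext ω j
  by_cases hjk : j = k
  · simp [G, hjk]
  by_cases hj : j ∈ N <;> simp [G, hjk, hj]

theorem integral_fdpSummand [IsProbabilityMeasure μ] (hK : 0 < K) (hα0 : 0 ≤ α)
    (hα1 : α ≤ 1) (hP : ∀ k, Measurable (P k))
    (h_iid : iIndepFun (fun k : {k // k ∈ N} => P k.1) μ)
    (h_block : IndepFun (fun ω => fun k : {k // k ∈ N} => P k.1 ω)
      (fun ω => fun k : {k // k ∉ N} => P k.1 ω) μ) {k : Fin K} (hk : k ∈ N)
    (h_unif : μ.map (P k) = volume.restrict (Set.Icc 0 1)) :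
    ∫ ω, fdpSummand K α (fun j => P j ω) k ∂μ = α / K := by
  set W := fun ω => Function.update (fun j => P j ω) k 0
  have hW : Measurable W := measurable_update_left.comp (measurable_pi_lambda _ hP)
  have hR : Measurable fun w : Fin K → ℝ => (bhCount K α w : ℝ) :=
    measurable_from_nat.comp (measurable_bhCount hK)
  have hK' : (0 : ℝ) < K := by exact_mod_cast hK
  have hf01 (w : Fin K → ℝ) : α * bhCount K α w / K ∈ Set.Icc 0 1 := by
    refine ⟨by positivity, div_le_one_of_le₀ ?_ hK'.le⟩
    calc α * bhCount K α w ≤ 1 * K := by gcongr; exact_mod_cast bhCount_le w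
      _ = K := one_mul _
  calc ∫ ω, fdpSummand K α (fun j => P j ω) k ∂μ
      = ∫ ω, α * bhCount K α (W ω) / K * (bhCount K α (W ω) : ℝ)⁻¹ ∂μ :=
        integral_ite_le_of_indepFun_uniform (hP k) hW (indepFun_update_zero hP h_iid h_block hk)
          h_unif ((hR.const_mul α).div_const _) hR.inv hf01 (C := 1)
          fun w => by simp [Nat.cast_inv_le_one]
    _ = ∫ _, α / K ∂μ := by
        refine integral_congr_ae (ae_of_all _ fun ω => ?_)
        have : (1 : ℝ) ≤ bhCount K α (W ω) := by
          exact_mod_cast one_le_bhCount (k := k) hK hα0 (by simp [W])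
        field_simp
    _ = α / K := by simp

end Probability

end BH

/-- **Theorem 1 (Benjamini–Hochberg 1995).** If the null p-values are i.i.d. uniform on
`[0,1]` and independent of the non-null p-values, the BH procedure at level `α ∈ (0,1)`
has FDR exactly `α K₀ / K`. -/
theorem bh_fdr_iid_uniform
    {Ω : Type*} [MeasurableSpace Ω] (μ : Measure Ω) [IsProbabilityMeasure μ]
    {K : ℕ} (hK : 0 < K) {α : ℝ} (hα : α ∈ Set.Ioo (0 : ℝ) 1)
    (P : Fin K → Ω → ℝ) (hP : ∀ k, Measurable (P k)) (N : Finset (Fin K))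
    (h_unif : ∀ k ∈ N, μ.map (P k) = volume.restrict (Set.Icc (0 : ℝ) 1))
    (h_iid : iIndepFun (fun k : {k // k ∈ N} => P k.1) μ)
    (h_block : IndepFun (fun ω => fun k : {k // k ∈ N} => P k.1 ω)
      (fun ω => fun k : {k // k ∉ N} => P k.1 ω) μ) :
    ∫ ω, fdp (bhRejects K α (fun k => P k ω)) N ∂μ = α * N.card / K := by
  obtain ⟨hα0, hα1⟩ := hα
  have h_nonneg : ∀ᵐ ω ∂μ, ∀ k ∈ N, 0 ≤ P k ω := by
    refine (Filter.eventually_all_finset N).2 fun k hk => ?_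
    have h := ae_restrict_of_forall_mem (μ := volume) measurableSet_Icc
      fun (x : ℝ) (hx : x ∈ Set.Icc 0 1) => hx.1
    rw [← h_unif k hk] at h
    exact ae_of_ae_map (hP k).aemeasurable h
  calc ∫ ω, fdp (bhRejects K α (fun k => P k ω)) N ∂μ
      = ∫ ω, ∑ k ∈ N, BH.fdpSummand K α (fun j => P j ω) k ∂μ :=
        integral_congr_ae <| h_nonneg.mono fun _ h =>
          BH.fdp_bhRejects_eq_sum_fdpSummand hK hα0.le h
    _ = ∑ k ∈ N, α / K := by
        rw [integral_finsetSum _ fun k _ => BH.integrable_fdpSummand hK hP k]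
        exact sum_congr rfl fun k hk =>
          BH.integral_fdpSummand hK hα0.le hα1.le hP h_iid h_block hk (h_unif k hk)
    _ = α * N.card / K := by rw [sum_const, nsmul_eq_mul]; ring
end

section
/- For each k, the hypothesis H_k is rejected by the BH procedure at level α if and only if P_k ≤ t_α, where t_α = sup{t ∈ [0,1] : K·t ≤ α·R(t)} and R(t) = |{j : P_j ≤ t}| ∨ 1. -/
open MeasureTheory ProbabilityTheory Finset
open scoped ENNReal Classical

lemma sortAsc_mono {K : ℕ} (p : Fin K → ℝ) : Monotone (sortAsc p) :=
  Tuple.monotone_sort p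

lemma card_filter_sort_le {K : ℕ} (p : Fin K → ℝ) (t : ℝ) :
    (univ.filter fun i => sortAsc p i ≤ t).card = (univ.filter fun j => p j ≤ t).card := by
  apply Finset.card_bij (fun i _ => Tuple.sort p i)
  · intro i hi
    simp only [mem_filter, mem_univ, true_and] at hi ⊢
    exact hi
  · intro a ha b hb hab
    exact (Tuple.sort p).injective hab
  · intro j hj
    refine ⟨(Tuple.sort p)⁻¹ j, ?_, by simp⟩
    simp only [mem_filter, mem_univ, true_and] at hj ⊢
    simpa [sortAsc] using hj

lemma sort_le_iff_lt_count {K : ℕ} (p : Fin K → ℝ) (t : ℝ) (i : Fin K) :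
    sortAsc p i ≤ t ↔ i.1 < (univ.filter fun j => p j ≤ t).card := by
  rw [← card_filter_sort_le]
  constructor
  · intro h
    have hsub : Finset.Iic i ⊆ univ.filter fun j => sortAsc p j ≤ t := by
      intro j hj
      simp only [mem_Iic] at hj
      simp only [mem_filter, mem_univ, true_and]
      exact le_trans (sortAsc_mono p hj) h
    have := Finset.card_le_card hsub
    rw [Fin.card_Iic] at this
    omega
  · intro h
    by_contra hq
    push_neg at hq
    have hsub : (univ.filter fun j => sortAsc p j ≤ t) ⊆ Finset.Iio i := by
      intro j hj
      simp only [mem_filter, mem_univ, true_and] at hj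
      simp only [mem_Iio]
      by_contra hij
      push_neg at hij
      exact absurd (le_trans (sortAsc_mono p hij) hj) (not_le.2 hq)
    have := Finset.card_le_card hsub
    rw [Fin.card_Iio] at this
    omega

/-- Each hypothesis `H_k` is rejected by the BH procedure at level `α` if and only if
`P_k ≤ t_α`, where `t_α = sup {t ∈ [0,1] : K t ≤ α R(t)}` and `R(t) = |{j : P_j ≤ t}| ∨ 1`. -/
theorem bh_rejects_iff_le_tAlpha
    {K : ℕ} (hK : 0 < K) {α : ℝ} (hα : α ∈ Set.Ioo (0 : ℝ) 1)
    (p : Fin K → ℝ) (hp : ∀ k, p k ∈ Set.Icc (0 : ℝ) 1) (k : Fin K) :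
    k ∈ bhRejects K α p ↔
      p k ≤ sSup {t ∈ Set.Icc (0 : ℝ) 1 |
        (K : ℝ) * t ≤ α * (max (univ.filter (fun j => p j ≤ t)).card 1 : ℕ)} := by
  obtain ⟨hα0, hα1⟩ := hα
  set S := {t ∈ Set.Icc (0 : ℝ) 1 |
      (K : ℝ) * t ≤ α * (max (univ.filter (fun j => p j ≤ t)).card 1 : ℕ)} with hS
  have h0S : (0 : ℝ) ∈ S := by
    constructor
    · exact ⟨le_refl 0, zero_le_one⟩
    · rw [mul_zero]
      positivity
  have hne : S.Nonempty := ⟨0, h0S⟩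
  have hbdd : BddAbove S := ⟨1, fun t ht => ht.1.2⟩
  set T := sSup S with hT
  have hT0 : 0 ≤ T := le_csSup hbdd h0S
  have hT1 : T ≤ 1 := csSup_le hne fun t ht => ht.1.2
  -- R is monotone
  have hRmono : ∀ t t' : ℝ, t ≤ t' →
      (max (univ.filter (fun j => p j ≤ t)).card 1 : ℕ) ≤
      (max (univ.filter (fun j => p j ≤ t')).card 1 : ℕ) := by
    intro t t' htt'
    apply max_le_max _ le_rfl
    apply Finset.card_le_card
    intro j hj
    simp only [mem_filter, mem_univ, true_and] at hj ⊢
    exact hj.trans htt'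
  -- key: T ∈ S
  have hTS : T ∈ S := by
    refine ⟨⟨hT0, hT1⟩, ?_⟩
    have hub : ∀ t ∈ S, t ≤ α * (max (univ.filter (fun j => p j ≤ T)).card 1 : ℕ) / K := by
      intro t ht
      have h1 : (K : ℝ) * t ≤ α * (max (univ.filter (fun j => p j ≤ t)).card 1 : ℕ) := ht.2
      have h2 : (α : ℝ) * (max (univ.filter (fun j => p j ≤ t)).card 1 : ℕ) ≤
          α * (max (univ.filter (fun j => p j ≤ T)).card 1 : ℕ) := by
        apply mul_le_mul_of_nonneg_left _ hα0.le
        exact_mod_cast hRmono t T (le_csSup hbdd ht)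
      have hKpos : (0 : ℝ) < K := by exact_mod_cast hK
      rw [le_div_iff₀ hKpos]
      linarith
    have := csSup_le hne hub
    have hKpos : (0 : ℝ) < K := by exact_mod_cast hK
    rw [le_div_iff₀ hKpos] at this
    linarith
  simp only [bhRejects, mem_filter, mem_univ, true_and]
  constructor
  · rintro ⟨i, hik, hpk⟩
    -- bhCount positive, so the filter is nonempty and the sup is attained
    have hfne : (univ.filter (fun i : Fin K =>
        (K : ℝ) * sortAsc p i / (i.1 + 1) ≤ α)).Nonempty := by
      by_contra hemp
      rw [Finset.not_nonempty_iff_eq_empty] at hemp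
      simp [bhCount, hemp] at hik
    obtain ⟨m, hm, hsup⟩ := Finset.exists_mem_eq_sup _ hfne (fun i : Fin K => i.1 + 1)
    simp only [mem_filter, mem_univ, true_and] at hm
    have him : i ≤ m := by
      have : i.1 + 1 ≤ m.1 + 1 := by
        rw [← hsup]
        exact hik
      rw [Fin.le_def]; omega
    have hqm_mem : sortAsc p m ∈ S := by
      have hq01 := hp (Tuple.sort p m)
      refine ⟨⟨hq01.1, hq01.2⟩, ?_⟩
      have hmpos : (0 : ℝ) < (m.1 : ℝ) + 1 := by positivity
      have h1 : (K : ℝ) * sortAsc p m ≤ α * (m.1 + 1) := by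
        have := hm
        rw [div_le_iff₀ hmpos] at this
        linarith
      have h2 : (m.1 + 1 : ℕ) ≤ (max (univ.filter (fun j => p j ≤ sortAsc p m)).card 1 : ℕ) := by
        have : m.1 < (univ.filter fun j => p j ≤ sortAsc p m).card :=
          (sort_le_iff_lt_count p (sortAsc p m) m).1 le_rfl
        omega
      calc (K : ℝ) * sortAsc p m ≤ α * (m.1 + 1) := h1
        _ ≤ α * (max (univ.filter (fun j => p j ≤ sortAsc p m)).card 1 : ℕ) := by
            apply mul_le_mul_of_nonneg_left _ hα0.le
            push_cast
            exact_mod_cast h2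
    calc p k ≤ sortAsc p i := hpk
      _ ≤ sortAsc p m := sortAsc_mono p him
      _ ≤ T := le_csSup hbdd hqm_mem
  · intro hpk
    -- p k ≤ T
    set c := (univ.filter fun j => p j ≤ T).card with hc
    have hc1 : 1 ≤ c := by
      apply Finset.card_pos.2
      exact ⟨k, by simp [hpk]⟩
    have hcK : c ≤ K := by
      calc c ≤ (univ : Finset (Fin K)).card := Finset.card_le_card (Finset.filter_subset _ _)
        _ = K := by simp
    set i : Fin K := ⟨c - 1, by omega⟩ with hi
    have hi1 : i.1 + 1 = c := by simp [hi]; omega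
    have hqi : sortAsc p i ≤ T := by
      rw [sort_le_iff_lt_count]
      simp [hi]
      omega
    -- i is in the bhCount filter
    have hifil : i ∈ univ.filter (fun i : Fin K => (K : ℝ) * sortAsc p i / (i.1 + 1) ≤ α) := by
      simp only [mem_filter, mem_univ, true_and]
      have hipos : (0 : ℝ) < (i.1 : ℝ) + 1 := by positivity
      rw [div_le_iff₀ hipos]
      have hRT : (max c 1 : ℕ) = c := by omega
      have h1 : (K : ℝ) * sortAsc p i ≤ (K : ℝ) * T :=
        mul_le_mul_of_nonneg_left hqi (by positivity)
      have h2 : (K : ℝ) * T ≤ α * c := by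
        have := hTS.2
        rwa [← hc, hRT] at this
      have h3 : (c : ℝ) = (i.1 : ℝ) + 1 := by
        rw_mod_cast [hi1]
      calc (K : ℝ) * sortAsc p i ≤ α * c := by linarith
        _ = α * ((i.1 : ℝ) + 1) := by rw [h3]
    have hle : i.1 + 1 ≤ bhCount K α p := by
      have := Finset.le_sup (f := fun i : Fin K => i.1 + 1) hifil
      simpa [bhCount] using this
    refine ⟨i, hle, ?_⟩
    -- p k ≤ sortAsc p i
    set j := (Tuple.sort p)⁻¹ k with hj
    have hqj : sortAsc p j = p k := by simp [sortAsc, hj]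
    have hjc : j.1 < c := by
      rw [← sort_le_iff_lt_count p T j, hqj]
      exact hpk
    have hji : j ≤ i := by
      rw [Fin.le_def]
      simp [hi]
      omega
    calc p k = sortAsc p j := hqj.symm
      _ ≤ sortAsc p i := sortAsc_mono p hji
end

section
/- If P₁,…,P_K are random variables such that the variables indexed by 𝒩 are i.i.d. uniform on [0,1] and independent of the others, and F(t) = |{k ∈ 𝒩 : P_k ≤ t}|, then for 0 < s ≤ t ≤ 1, E[F(s) | 𝓕_t] = (s/t)·F(t), where 𝓕_t = σ{(1{P₁≤u},…,1{P_K≤u}) : u ∈ [t,1]}; i.e., t ↦ F(t)/t is a backward martingale on (0,1]. -/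
open MeasureTheory ProbabilityTheory Finset
open scoped ENNReal Classical

/-!
Fix a null index `k`. On the event `{P k ≤ t}` every indicator `1{P k ≤ u}` with `u ≥ t`
equals one, so there the generators of `𝓕_t` are functions of the other p-values alone:
each `A ∈ 𝓕_t` agrees on `{P k ≤ t}` with an event `B` determined by `(P j)_{j ≠ k}`, which is
independent of `P k`. Hence `μ (A ∩ {P k ≤ s}) = s μ B = (s / t) μ (A ∩ {P k ≤ t})`, and summing
over `k ∈ 𝒩` gives the defining identity `∫_A F(s) = (s / t) ∫_A F(t)` of the conditional
expectation.
-/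

section Independence

variable {Ω α β γ : Type*} [MeasurableSpace Ω] {μ : Measure Ω} [IsFiniteMeasure μ]
  [MeasurableSpace α] [MeasurableSpace β] [MeasurableSpace γ] {X : Ω → α} {Y : Ω → β} {Z : Ω → γ}

theorem ProbabilityTheory.IndepFun.indepFun_prodMk_right (hX : Measurable X) (hY : Measurable Y)
    (hZ : Measurable Z) (hXY : X ⟂ᵢ[μ] Y) (hXYZ : (fun ω ↦ (X ω, Y ω)) ⟂ᵢ[μ] Z) :
    X ⟂ᵢ[μ] fun ω ↦ (Y ω, Z ω) := by
  have hYZ : Y ⟂ᵢ[μ] Z := hXYZ.comp measurable_snd measurable_id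
  rw [indepFun_iff_map_prod_eq_prod_map_map hX.aemeasurable (hY.prodMk hZ).aemeasurable]
  rw [indepFun_iff_map_prod_eq_prod_map_map hX.aemeasurable hY.aemeasurable] at hXY
  rw [indepFun_iff_map_prod_eq_prod_map_map (hX.prodMk hY).aemeasurable hZ.aemeasurable] at hXYZ
  rw [indepFun_iff_map_prod_eq_prod_map_map hY.aemeasurable hZ.aemeasurable] at hYZ
  calc μ.map (fun ω ↦ (X ω, Y ω, Z ω))
      = (μ.map fun ω ↦ ((X ω, Y ω), Z ω)).map MeasurableEquiv.prodAssoc := by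
        rw [Measure.map_map MeasurableEquiv.prodAssoc.measurable ((hX.prodMk hY).prodMk hZ)]
        rfl
    _ = (μ.map X).prod ((μ.map Y).prod (μ.map Z)) := by
        rw [hXYZ, hXY, Measure.prodAssoc_prod]
    _ = (μ.map X).prod (μ.map fun ω ↦ (Y ω, Z ω)) := by rw [hYZ]

end Independence

theorem exists_measurableSet_inter_eq_of_comap_le {Ω : Type*} {m m' : MeasurableSpace Ω}
    {E : Set Ω} (h : MeasurableSpace.comap ((↑) : E → Ω) m ≤ MeasurableSpace.comap (↑) m')
    {A : Set Ω} (hA : MeasurableSet[m] A) : ∃ B, MeasurableSet[m'] B ∧ E ∩ A = E ∩ B := by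
  obtain ⟨B, hB, hBA⟩ := h _ ⟨A, hA, rfl⟩
  exact ⟨B, hB, (Subtype.preimage_coe_eq_preimage_coe_iff.1 hBA).symm⟩

section BackwardFiltration

variable {Ω ι : Type*} (P : ι → Ω → ℝ)

noncomputable def levelIndicators (u : ℝ) (ω : Ω) : ι → ℝ := fun k ↦ if P k ω ≤ u then 1 else 0

noncomputable abbrev backwardFiltration (t : ℝ) : MeasurableSpace Ω :=
  ⨆ u ∈ Set.Icc t (1 : ℝ), MeasurableSpace.comap (levelIndicators P u) inferInstance

def otherValues (k : ι) (ω : Ω) : {j // j ≠ k} → ℝ := fun j ↦ P j ω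

variable {P}

theorem measurable_levelIndicators [MeasurableSpace Ω] (hP : ∀ k, Measurable (P k)) (u : ℝ) :
    Measurable (levelIndicators P u) :=
  measurable_pi_lambda _ fun k ↦
    Measurable.ite (measurableSet_le (hP k) measurable_const) measurable_const measurable_const

theorem backwardFiltration_le [MeasurableSpace Ω] (hP : ∀ k, Measurable (P k)) (t : ℝ) :
    backwardFiltration P t ≤ ‹MeasurableSpace Ω› :=
  iSup₂_le fun u _ ↦ (measurable_levelIndicators hP u).comap_le

theorem measurableSet_backwardFiltration {t : ℝ} (ht : t ≤ 1) (k : ι) :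
    MeasurableSet[backwardFiltration P t] {ω | P k ω ≤ t} := by
  have hle : MeasurableSpace.comap (levelIndicators P t) inferInstance ≤ backwardFiltration P t :=
    le_iSup₂ (f := fun u (_ : u ∈ Set.Icc t 1) ↦
      MeasurableSpace.comap (levelIndicators P u) inferInstance) t ⟨le_rfl, ht⟩
  refine hle _ ⟨(fun x ↦ x k) ⁻¹' {1}, measurable_pi_apply k (measurableSet_singleton 1), ?_⟩
  ext ω
  by_cases h : P k ω ≤ t <;> simp [levelIndicators, h]

theorem comap_subtypeVal_backwardFiltration_le (k : ι) (t : ℝ) :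
    MeasurableSpace.comap ((↑) : {ω | P k ω ≤ t} → Ω) (backwardFiltration P t) ≤
      MeasurableSpace.comap (↑) (MeasurableSpace.comap (otherValues P k) inferInstance) := by
  simp only [backwardFiltration, MeasurableSpace.comap_iSup, MeasurableSpace.comap_comp]
  refine iSup₂_le fun u hu ↦ ?_
  let g : ({j // j ≠ k} → ℝ) → ι → ℝ := fun x j ↦
    if h : j = k then 1 else if x ⟨j, h⟩ ≤ u then 1 else 0
  have hg : Measurable g := by
    refine measurable_pi_lambda _ fun j ↦ ?_
    by_cases h : j = k
    · simp only [g, h, dite_true]; exact measurable_const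
    · simp only [g, h, dite_false]
      exact Measurable.ite (measurableSet_le (measurable_pi_apply _) measurable_const)
        measurable_const measurable_const
  have hfac : levelIndicators P u ∘ ((↑) : {ω | P k ω ≤ t} → Ω) = g ∘ otherValues P k ∘ (↑) := by
    ext ⟨ω, hω⟩ j
    by_cases h : j = k
    · subst h; simp [levelIndicators, g, hω.out.trans hu.1]
    · simp only [Function.comp_apply, levelIndicators, g, h, dite_false]
      rfl
  rw [hfac]
  exact MeasurableSpace.comap_comp.symm.trans_le (MeasurableSpace.comap_mono hg.comap_le)

end BackwardFiltration

section NullCounts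

variable {Ω ι : Type*} {P : ι → Ω → ℝ}

noncomputable def countBelow (N : Finset ι) (P : ι → Ω → ℝ) (u : ℝ) (ω : Ω) : ℝ :=
  (N.filter (fun k ↦ P k ω ≤ u)).card

theorem countBelow_eq_sum_indicator (N : Finset ι) (P : ι → Ω → ℝ) (u : ℝ) :
    countBelow N P u = fun ω ↦ ∑ k ∈ N, {ω | P k ω ≤ u}.indicator 1 ω := by
  ext ω
  simp only [countBelow, Finset.natCast_card_filter, Set.indicator_apply,
    Set.mem_ofPred_eq, Pi.one_apply]

theorem measurable_countBelow {m : MeasurableSpace Ω} {N : Finset ι} {u : ℝ}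
    (h : ∀ k ∈ N, MeasurableSet[m] {ω | P k ω ≤ u}) : Measurable[m] (countBelow N P u) := by
  rw [countBelow_eq_sum_indicator]
  exact Finset.measurable_sum N fun k hk ↦ measurable_const.indicator (h k hk)

variable [MeasurableSpace Ω] {μ : Measure Ω}

theorem measureReal_le_inter_mul_eq {k : ι} (hk : P k ⟂ᵢ[μ] otherValues P k)
    {s t : ℝ} (hst : s ≤ t) {A : Set Ω} (hA : MeasurableSet[backwardFiltration P t] A) :
    μ.real ({ω | P k ω ≤ s} ∩ A) * μ.real {ω | P k ω ≤ t} =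
      μ.real ({ω | P k ω ≤ t} ∩ A) * μ.real {ω | P k ω ≤ s} := by
  obtain ⟨B, hB, hAB⟩ :=
    exists_measurableSet_inter_eq_of_comap_le (comap_subtypeVal_backwardFiltration_le k t) hA
  have hsub : {ω | P k ω ≤ s} ⊆ {ω | P k ω ≤ t} := fun ω hω ↦ hω.out.trans hst
  have hAB' : {ω | P k ω ≤ s} ∩ A = {ω | P k ω ≤ s} ∩ B := by
    rw [← Set.inter_eq_left.2 hsub, Set.inter_assoc, hAB, ← Set.inter_assoc]
  have hind : ∀ c, μ.real ({ω | P k ω ≤ c} ∩ B) = μ.real {ω | P k ω ≤ c} * μ.real B := fun c ↦ by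
    simp only [measureReal_def, ← ENNReal.toReal_mul,
      hk.meas_inter (s := {ω | P k ω ≤ c}) ⟨Set.Iic c, measurableSet_Iic, rfl⟩ hB]
  rw [hAB', hAB, hind, hind]
  ring

variable [IsFiniteMeasure μ]

theorem integrable_countBelow (hP : ∀ k, Measurable (P k)) (N : Finset ι) (u : ℝ) :
    Integrable (countBelow N P u) μ := by
  rw [countBelow_eq_sum_indicator]
  exact integrable_finsetSum N fun k _ ↦
    (integrable_const 1).indicator (measurableSet_le (hP k) measurable_const)

theorem setIntegral_countBelow (hP : ∀ k, Measurable (P k)) (N : Finset ι) (u : ℝ) (A : Set Ω) :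
    ∫ ω in A, countBelow N P u ω ∂μ = ∑ k ∈ N, μ.real ({ω | P k ω ≤ u} ∩ A) := by
  have hmeas k : MeasurableSet {ω | P k ω ≤ u} := measurableSet_le (hP k) measurable_const
  simp only [countBelow_eq_sum_indicator]
  rw [integral_finsetSum N fun k _ ↦ (integrable_const 1).indicator (hmeas k)]
  exact Finset.sum_congr rfl fun k _ ↦ by
    rw [integral_indicator_one (hmeas k), measureReal_restrict_apply (hmeas k)]

theorem condExp_countBelow_backwardFiltration (hP : ∀ k, Measurable (P k)) {N : Finset ι}
    (hind : ∀ k ∈ N, P k ⟂ᵢ[μ] otherValues P k)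
    (hcdf : ∀ k ∈ N, ∀ c ∈ Set.Icc (0 : ℝ) 1, μ.real {ω | P k ω ≤ c} = c)
    {s t : ℝ} (hs : 0 < s) (hst : s ≤ t) (ht : t ≤ 1) :
    μ[countBelow N P s | backwardFiltration P t] =ᵐ[μ] fun ω ↦ s / t * countBelow N P t ω := by
  have ht0 : 0 < t := hs.trans_le hst
  have hm := backwardFiltration_le hP t
  refine (ae_eq_condExp_of_forall_setIntegral_eq hm (integrable_countBelow hP N s)
    (fun A _ _ ↦ ((integrable_countBelow hP N t).const_mul _).integrableOn)
    (fun A hA _ ↦ ?_) ?_).symm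
  · rw [integral_const_mul, setIntegral_countBelow hP, setIntegral_countBelow hP, Finset.mul_sum]
    refine Finset.sum_congr rfl fun k hk ↦ ?_
    have key := measureReal_le_inter_mul_eq (hind k hk) hst hA
    rw [hcdf k hk s ⟨hs.le, hst.trans ht⟩, hcdf k hk t ⟨ht0.le, ht⟩] at key
    field_simp
    linarith
  · exact ((measurable_countBelow fun k _ ↦ measurableSet_backwardFiltration ht k).const_mul
      _).aestronglyMeasurable

end NullCounts

section UniformNulls

variable {Ω ι : Type*} [MeasurableSpace Ω] {μ : Measure Ω}

theorem measureReal_le_eq_of_map_eq_uniform {X : Ω → ℝ} (hX : Measurable X)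
    (h : μ.map X = volume.restrict (Set.Icc 0 1)) {c : ℝ} (hc : c ∈ Set.Icc (0 : ℝ) 1) :
    μ.real {ω | X ω ≤ c} = c := by
  change μ.real (X ⁻¹' Set.Iic c) = c
  have hIcc : Set.Iic c ∩ Set.Icc 0 1 = Set.Icc 0 c := by
    ext x
    simp only [Set.mem_inter_iff, Set.mem_Iic, Set.mem_Icc]
    exact ⟨fun h ↦ ⟨h.2.1, h.1⟩, fun h ↦ ⟨h.2, h.1, h.2.trans hc.2⟩⟩
  rw [← map_measureReal_apply hX measurableSet_Iic, h, measureReal_restrict_apply measurableSet_Iic,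
    hIcc, Real.volume_real_Icc_of_le hc.1, sub_zero]

theorem indepFun_others_of_iIndepFun [IsFiniteMeasure μ] {P : ι → Ω → ℝ}
    (hP : ∀ k, Measurable (P k)) {N : Finset ι}
    (h_iid : iIndepFun (fun k : {k // k ∈ N} ↦ P k.1) μ)
    (h_block : (fun ω (k : {k // k ∈ N}) ↦ P k.1 ω) ⟂ᵢ[μ] fun ω (k : {k // k ∉ N}) ↦ P k.1 ω)
    {k : ι} (hk : k ∈ N) : P k ⟂ᵢ[μ] otherValues P k := by
  let k' : {k // k ∈ N} := ⟨k, hk⟩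
  let V : Ω → ({k'}ᶜ : Finset {k // k ∈ N}) → ℝ := fun ω j ↦ P j.1.1 ω
  let W : Ω → {j // j ∉ N} → ℝ := fun ω j ↦ P j.1 ω
  have hV : Measurable V := measurable_pi_lambda _ fun j ↦ hP j.1.1
  have hW : Measurable W := measurable_pi_lambda _ fun j ↦ hP j.1
  have hUV : P k ⟂ᵢ[μ] V :=
    (h_iid.indepFun_finset {k'} {k'}ᶜ disjoint_compl_right fun j ↦ hP j.1).comp
      (measurable_pi_apply (⟨k', Finset.mem_singleton_self k'⟩ : ({k'} : Finset _)))
      measurable_id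
  have hUVW : (fun ω ↦ (P k ω, V ω)) ⟂ᵢ[μ] W :=
    h_block.comp (φ := fun x ↦ (x k', fun j : ({k'}ᶜ : Finset _) ↦ x j.1)) (by fun_prop)
      measurable_id
  let g : (({k'}ᶜ : Finset {k // k ∈ N}) → ℝ) × ({j // j ∉ N} → ℝ) → {j // j ≠ k} → ℝ :=
    fun x j ↦ if h : j.1 ∈ N then x.1 ⟨⟨j.1, h⟩, by simpa [k', Subtype.ext_iff] using j.2⟩
      else x.2 ⟨j.1, h⟩
  have hg : Measurable g := by
    refine measurable_pi_lambda _ fun j ↦ ?_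
    by_cases h : j.1 ∈ N
    · simp only [g, h, dite_true]; exact (measurable_pi_apply _).comp measurable_fst
    · simp only [g, h, dite_false]; exact (measurable_pi_apply _).comp measurable_snd
  have hfac : otherValues P k = g ∘ fun ω ↦ (V ω, W ω) := by
    ext ω j
    by_cases h : j.1 ∈ N <;> simp [g, h, otherValues, V, W]
  rw [hfac]
  exact (hUV.indepFun_prodMk_right (hP k) hV hW hUVW).comp measurable_id hg

end UniformNulls

/-- If the null p-values are i.i.d. uniform on `[0,1]` and independent of the others, then
for `0 < s ≤ t ≤ 1`, `E[F(s) ∣ 𝓕_t] = (s/t) F(t)` a.s., where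
`F(u) = |{k ∈ 𝒩 : P_k ≤ u}|` and `𝓕_t = σ{(1_{P_1 ≤ u}, …, 1_{P_K ≤ u}) : u ∈ [t,1]}`;
i.e. `u ↦ F(u)/u` is a backward martingale on `(0,1]`. -/
theorem backward_martingale_null_counts
    {Ω : Type*} [MeasurableSpace Ω] (μ : Measure Ω) [IsProbabilityMeasure μ]
    {K : ℕ} (P : Fin K → Ω → ℝ) (hP : ∀ k, Measurable (P k)) (N : Finset (Fin K))
    (h_unif : ∀ k ∈ N, μ.map (P k) = volume.restrict (Set.Icc (0 : ℝ) 1))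
    (h_iid : iIndepFun (fun k : {k // k ∈ N} => P k.1) μ)
    (h_block : IndepFun (fun ω => fun k : {k // k ∈ N} => P k.1 ω)
      (fun ω => fun k : {k // k ∉ N} => P k.1 ω) μ)
    {s t : ℝ} (hs : 0 < s) (hst : s ≤ t) (ht : t ≤ 1) :
    μ[(fun ω => ((N.filter (fun k => P k ω ≤ s)).card : ℝ)) |
        ⨆ u ∈ Set.Icc t (1 : ℝ), MeasurableSpace.comap
          (fun ω => fun k : Fin K => if P k ω ≤ u then (1 : ℝ) else 0) inferInstance]
      =ᵐ[μ] fun ω => s / t * ((N.filter (fun k => P k ω ≤ t)).card : ℝ) :=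
  condExp_countBelow_backwardFiltration hP
    (fun _ hk ↦ indepFun_others_of_iIndepFun hP h_iid h_block hk)
    (fun k hk _ hc ↦ measureReal_le_eq_of_map_eq_uniform (hP k) (h_unif k hk) hc) hs hst ht
end

section
/- If the p-values satisfy positive regression dependence on the subset of nulls (PRDS), then the BH procedure at level α has FDR at most α·K₀/K. -/
/-
The BH rejection set is `{k | p k ≤ α R / K}`, where `R = bhCount` is the number of rejections,
so the FDP is `∑_{k ∈ N} 1{p k ≤ α R / K} / R` and it suffices to show
`E[1{p k ≤ α R / K} / R] ≤ α / K` for every null `k`. Write `h m = P(R ≤ m | p k ≤ α m / K)`.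
Since `R` is a decreasing function of the p-values, `{R ≤ m}` is an increasing set and PRDS gives
`h (r - 1) ≤ P(R ≤ r - 1 | p k ≤ α r / K)`; hence
`P(p k ≤ α r / K, R = r) ≤ P(p k ≤ α r / K) (h r - h (r - 1)) ≤ (α r / K) (h r - h (r - 1))`,
and the sum over `r` with weights `1 / r` telescopes to at most `α / K`.
-/

open MeasureTheory ProbabilityTheory Finset
open scoped ENNReal Classical

section OrderStatistics

variable {K : ℕ}

theorem sortAsc_le_iff (p : Fin K → ℝ) (i : Fin K) (c : ℝ) :
    sortAsc p i ≤ c ↔ i < #{j | p j ≤ c} := by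
  rw [sortAsc, ← Tuple.lt_card_le_iff_apply_le_of_monotone (Tuple.monotone_sort p)]
  exact Iff.of_eq (congrArg _ (card_equiv (Tuple.sort p) (by simp)))

theorem monotone_card_filter_le (p : Fin K → ℝ) : Monotone fun c => #{j | p j ≤ c} :=
  fun _ _ h => card_le_card fun j hj => by simp only [mem_filter_univ] at hj ⊢; linarith

theorem le_sortAsc_of_card_le {p : Fin K → ℝ} {i k : Fin K} {c : ℝ} (hk : p k ≤ c)
    (hc : #{j | p j ≤ c} ≤ i + 1) : p k ≤ sortAsc p i := by
  by_contra! hlt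
  have hsub : filter (p · ≤ sortAsc p i) univ ⊂ filter (p · ≤ c) univ :=
    (ssubset_iff_of_subset fun j hj => by simp only [mem_filter_univ] at hj ⊢; linarith).2
      ⟨k, by simpa using hk, by simpa using hlt⟩
  have := (sortAsc_le_iff p i _).1 le_rfl
  have := card_lt_card hsub
  omega

end OrderStatistics

section BH

variable {K : ℕ} {α : ℝ}

theorem bh_condition_iff_lt_card (p : Fin K → ℝ) (i : Fin K) :
    (K : ℝ) * sortAsc p i / (i + 1) ≤ α ↔ i < #{j | p j ≤ α / K * (i + 1)} := by
  have hK : (0 : ℝ) < K := by exact_mod_cast i.pos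
  rw [← sortAsc_le_iff, div_le_iff₀ (by positivity), div_mul_eq_mul_div, le_div_iff₀ hK,
    mul_comm]

theorem bhCount_le_iff {p : Fin K → ℝ} {n : ℕ} :
    bhCount K α p ≤ n ↔ ∀ i : Fin K, i < #{j | p j ≤ α / K * (i + 1)} → i + 1 ≤ n := by
  simp [bhCount, bh_condition_iff_lt_card]

theorem bhCount_le (α : ℝ) (p : Fin K → ℝ) : bhCount K α p ≤ K :=
  bhCount_le_iff.2 fun i _ => i.isLt

theorem le_bhCount {p : Fin K → ℝ} {r : ℕ} (hr : r < K)
    (h : r < #{j | p j ≤ α / K * (r + 1)}) : r + 1 ≤ bhCount K α p :=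
  bhCount_le_iff.1 le_rfl ⟨r, hr⟩ h

theorem bhCount_le_card (p : Fin K → ℝ) :
    bhCount K α p ≤ #{j | p j ≤ α / K * bhCount K α p} := by
  rcases Nat.eq_zero_or_pos (bhCount K α p) with h | h
  · simp [h]
  obtain ⟨i, hi, hRi⟩ :
      ∃ i : Fin K, i < #{j | p j ≤ α / K * (i + 1)} ∧ bhCount K α p - 1 < i + 1 := by
    simpa using bhCount_le_iff.not.1 (by omega : ¬ bhCount K α p ≤ bhCount K α p - 1)
  have hR : bhCount K α p = i + 1 := le_antisymm (by omega) (bhCount_le_iff.1 le_rfl i hi)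
  rw [hR]
  push_cast
  omega

theorem bhCount_eq_card (hα : 0 ≤ α) (p : Fin K → ℝ) :
    bhCount K α p = #{j | p j ≤ α / K * bhCount K α p} := by
  refine le_antisymm (bhCount_le_card p) ?_
  by_contra! hlt
  obtain ⟨m, hm⟩ :=
    Nat.exists_eq_add_one_of_ne_zero (by omega : #{j | p j ≤ α / K * bhCount K α p} ≠ 0)
  have hmK : m < K := by
    have := (card_le_univ ({j | p j ≤ α / K * bhCount K α p} : Finset (Fin K))).trans_eq
      (Fintype.card_fin K)
    omega
  have hRm : (bhCount K α p : ℝ) ≤ m + 1 := by exact_mod_cast (by omega : bhCount K α p ≤ m + 1)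
  have hmono : #{j | p j ≤ α / K * bhCount K α p} ≤ #{j | p j ≤ α / K * (m + 1)} :=
    monotone_card_filter_le p (by gcongr)
  have := le_bhCount hmK (α := α) (p := p) (by omega)
  omega

theorem bhRejects_eq (hα : 0 ≤ α) (p : Fin K → ℝ) :
    bhRejects K α p = ({k | p k ≤ α / K * bhCount K α p} : Finset (Fin K)) := by
  ext k
  simp only [bhRejects, mem_filter_univ]
  constructor
  · rintro ⟨i, hi, hk⟩
    exact hk.trans ((sortAsc_le_iff p i _).2 (by rw [← bhCount_eq_card hα]; omega))
  · intro hk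
    have hpos : 0 < bhCount K α p :=
      (bhCount_eq_card hα p).symm ▸ card_pos.2 ⟨k, by simpa using hk⟩
    have hR := bhCount_le α p
    exact ⟨⟨bhCount K α p - 1, by omega⟩, (Nat.sub_add_cancel hpos).le,
      le_sortAsc_of_card_le hk (by rw [← bhCount_eq_card hα]; exact (Nat.sub_add_cancel hpos).ge)⟩

theorem card_bhRejects (hα : 0 ≤ α) (p : Fin K → ℝ) : #(bhRejects K α p) = bhCount K α p := by
  rw [bhRejects_eq hα, ← bhCount_eq_card hα]

theorem bhCount_antitone (hα : 0 ≤ α) : Antitone (bhCount K α) := by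
  intro p q hpq
  rcases Nat.eq_zero_or_pos (bhCount K α q) with h | h
  · simp [h]
  obtain ⟨r, hr⟩ := Nat.exists_eq_add_one_of_ne_zero h.ne'
  have hcard : #{j | q j ≤ α / K * bhCount K α q} ≤ #{j | p j ≤ α / K * bhCount K α q} :=
    card_le_card fun j hj => by simp only [mem_filter_univ] at hj ⊢; exact (hpq j).trans hj
  rw [← bhCount_eq_card hα, hr] at hcard
  push_cast at hcard
  rw [hr]
  exact le_bhCount (by have := bhCount_le α q; omega) (by omega)

theorem increasingSet_bhCount_le (hα : 0 ≤ α) (m : ℕ) :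
    IncreasingSet {x : Fin K → ℝ | bhCount K α x ≤ m} :=
  fun _ hx _ hxy => (bhCount_antitone hα hxy).trans hx

-- With no rejection both sides vanish, the right one because `(0 : ℝ)⁻¹ = 0`.
theorem fdp_bhRejects (hα : 0 ≤ α) (p : Fin K → ℝ) (N : Finset (Fin K)) :
    fdp (bhRejects K α p) N =
      ∑ k ∈ N, if p k ≤ α / K * bhCount K α p then (bhCount K α p : ℝ)⁻¹ else 0 := by
  rcases Nat.eq_zero_or_pos (bhCount K α p) with h | h
  · have hempty : bhRejects K α p = ∅ := card_eq_zero.1 ((card_bhRejects hα p).trans h)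
    simp [fdp, hempty, h]
  have hDN : bhRejects K α p ∩ N = {k ∈ N | p k ≤ α / K * bhCount K α p} := by
    ext k; simp [bhRejects_eq hα, and_comm]
  rw [fdp, hDN, sum_ite, sum_const_zero, add_zero, sum_const, nsmul_eq_mul, card_bhRejects hα,
    max_eq_left h, div_eq_mul_inv]

end BH

section Measurability

theorem Finset.measurable_sup {α δ ι : Type*} [MeasurableSpace α] [MeasurableSpace δ]
    [SemilatticeSup α] [OrderBot α] [MeasurableSup₂ α] {s : Finset ι} {f : ι → δ → α}
    (hf : ∀ i ∈ s, Measurable (f i)) : Measurable (s.sup f) :=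
  Finset.sup_induction measurable_const (fun _ hf _ hg => hf.sup hg) hf

variable {K : ℕ}

theorem measurable_card_filter_le (c : ℝ) : Measurable fun x : Fin K → ℝ => #{j | x j ≤ c} := by
  simp_rw [card_filter]
  exact Finset.measurable_sum _ fun j _ =>
    Measurable.ite (measurableSet_le (measurable_pi_apply j) measurable_const)
      measurable_const measurable_const

theorem measurable_bhCount (α : ℝ) : Measurable (bhCount K α) := by
  have : bhCount K α =
      univ.sup fun (i : Fin K) x => if i < #{j | x j ≤ α / K * (i + 1)} then i.1 + 1 else 0 := by
    ext x
    simp [bhCount, bh_condition_iff_lt_card, sup_ite]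
  rw [this]
  exact Finset.measurable_sup fun i _ =>
    Measurable.ite (measurableSet_lt measurable_const (measurable_card_filter_le _))
      measurable_const measurable_const

end Measurability

section DependencyControl

variable {Ω : Type*} {X : Ω → ℝ} {R : Ω → ℕ} {c : ℝ} {n : ℕ}

theorem ite_le_mul_inv_eq_sum_indicator (hRn : ∀ ω, R ω ≤ n) (ω : Ω) :
    (if X ω ≤ c * R ω then (R ω : ℝ)⁻¹ else 0) =
      ∑ r ∈ range n, {ω | X ω ≤ c * (r + 1) ∧ R ω = r + 1}.indicator
        (fun _ => ((r : ℝ) + 1)⁻¹) ω := by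
  simp only [Set.indicator_apply, Set.mem_ofPred_eq]
  rcases Nat.eq_zero_or_pos (R ω) with h | h
  · simp [h]
  · obtain ⟨m, hm⟩ := Nat.exists_eq_add_one_of_ne_zero h.ne'
    rw [sum_eq_single_of_mem m (mem_range.2 (by have := hRn ω; omega))]
    · simp [hm]
    · intro r _ hrm
      simp [hm, Ne.symm hrm]

variable [MeasurableSpace Ω] {μ : Measure Ω}

theorem measureReal_inter_eq_mul_cond [IsFiniteMeasure μ] {s : Set Ω} (hs : MeasurableSet s)
    (t : Set Ω) : μ.real (s ∩ t) = μ.real s * (μ[|s]).real t := by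
  rw [measureReal_def, ← cond_mul_eq_inter hs t, ENNReal.toReal_mul, mul_comm]
  rfl

theorem integrable_ite_le_mul_inv [IsFiniteMeasure μ] (hX : Measurable X) (hR : Measurable R) :
    Integrable (fun ω => if X ω ≤ c * R ω then (R ω : ℝ)⁻¹ else 0) μ := by
  refine Integrable.of_bound (Measurable.aestronglyMeasurable ?_) 1 (ae_of_all _ fun ω => ?_)
  · exact Measurable.ite (measurableSet_le hX (by fun_prop)) (by fun_prop) measurable_const
  · split_ifs <;> simp [Nat.cast_inv_le_one]

noncomputable def condProbCountLe (μ : Measure Ω) (X : Ω → ℝ) (R : Ω → ℕ) (c : ℝ) (m : ℕ) : ℝ :=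
  (μ[|{ω | X ω ≤ c * m}]).real {ω | R ω ≤ m}

theorem condProbCountLe_le_cond (hc : 0 ≤ c)
    (hdep : ∀ m : ℕ, Monotone fun x => μ[|{ω | X ω ≤ x}] {ω | R ω ≤ m}) (m : ℕ) :
    condProbCountLe μ X R c m ≤ (μ[|{ω | X ω ≤ c * (m + 1)}]).real {ω | R ω ≤ m} :=
  ENNReal.toReal_mono (measure_ne_top _ _) (hdep m (by gcongr; linarith))

theorem measureReal_le_and_eq_le [IsFiniteMeasure μ] (hX : Measurable X) (hR : Measurable R)
    (hc : 0 ≤ c) (hdep : ∀ m : ℕ, Monotone fun x => μ[|{ω | X ω ≤ x}] {ω | R ω ≤ m}) (r : ℕ)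
    (hX_le : μ {ω | X ω ≤ c * (r + 1)} ≤ ENNReal.ofReal (c * (r + 1))) :
    μ.real {ω | X ω ≤ c * (r + 1) ∧ R ω = r + 1}
      ≤ c * (r + 1) * (condProbCountLe μ X R c (r + 1) - condProbCountLe μ X R c r) := by
  have hsplit : {ω | X ω ≤ c * (r + 1) ∧ R ω = r + 1}
      = {ω | X ω ≤ c * (r + 1)} ∩ ({ω | R ω ≤ r + 1} \ {ω | R ω ≤ r}) := by
    ext ω
    simp only [Set.mem_inter_iff, Set.mem_sdiff, Set.mem_ofPred_eq, not_le]
    exact and_congr_right fun _ => by omega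
  have hs : μ.real {ω | X ω ≤ c * (r + 1)} ≤ c * (r + 1) :=
    ENNReal.toReal_le_of_le_ofReal (by positivity) hX_le
  have hcond : (μ[|{ω | X ω ≤ c * (r + 1)}]).real {ω | R ω ≤ r + 1}
      = condProbCountLe μ X R c (r + 1) := by
    rw [condProbCountLe, Nat.cast_succ]
  have hC : {ω | R ω ≤ r} ⊆ {ω | R ω ≤ r + 1} := fun _ hω => Nat.le_succ_of_le hω
  have hup : (μ[|{ω | X ω ≤ c * (r + 1)}]).real {ω | R ω ≤ r}
      ≤ condProbCountLe μ X R c (r + 1) := hcond ▸ measureReal_mono hC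
  rw [hsplit, measureReal_inter_eq_mul_cond (measurableSet_le hX measurable_const),
    measureReal_sdiff hC (measurableSet_le hR measurable_const), hcond]
  have hlow := condProbCountLe_le_cond hc hdep r
  gcongr

theorem integral_ite_le_mul_inv_le [IsProbabilityMeasure μ] (hX : Measurable X)
    (hR : Measurable R) (hc : 0 ≤ c) (hRn : ∀ ω, R ω ≤ n)
    (hX_le : ∀ r < n, μ {ω | X ω ≤ c * (r + 1)} ≤ ENNReal.ofReal (c * (r + 1)))
    (hdep : ∀ m : ℕ, Monotone fun x => μ[|{ω | X ω ≤ x}] {ω | R ω ≤ m}) :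
    ∫ ω, (if X ω ≤ c * R ω then (R ω : ℝ)⁻¹ else 0) ∂μ ≤ c := by
  set h := condProbCountLe μ X R c
  have hE : ∀ r : ℕ, MeasurableSet {ω | X ω ≤ c * (r + 1) ∧ R ω = r + 1} := fun r =>
    (measurableSet_le hX measurable_const).inter (measurableSet_eq_fun hR measurable_const)
  calc ∫ ω, (if X ω ≤ c * R ω then (R ω : ℝ)⁻¹ else 0) ∂μ
      = ∑ r ∈ range n, μ.real {ω | X ω ≤ c * (r + 1) ∧ R ω = r + 1} * ((r : ℝ) + 1)⁻¹ := by
        simp_rw [ite_le_mul_inv_eq_sum_indicator hRn]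
        rw [integral_finsetSum _ fun r _ => (integrable_const _).indicator (hE r)]
        simp_rw [integral_indicator_const _ (hE _), smul_eq_mul]
    _ ≤ ∑ r ∈ range n, c * (r + 1) * (h (r + 1) - h r) * ((r : ℝ) + 1)⁻¹ :=
        sum_le_sum fun r hr => by
          gcongr
          exact measureReal_le_and_eq_le hX hR hc hdep r (hX_le r (mem_range.1 hr))
    _ = c * (h n - h 0) := by
        rw [← sum_range_sub, mul_sum]
        exact sum_congr rfl fun r _ => by field_simp
    _ ≤ c * 1 := by
        have hn : h n ≤ 1 := measureReal_le_one
        have h0 : 0 ≤ h 0 := measureReal_nonneg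
        gcongr
        linarith
    _ = c := mul_one c

end DependencyControl

theorem bh_fdr_prds_general
    {Ω : Type*} [MeasurableSpace Ω] (μ : Measure Ω) [IsProbabilityMeasure μ]
    {K : ℕ} {α : ℝ} (hα : α ∈ Set.Ioo (0 : ℝ) 1)
    (P : Fin K → Ω → ℝ) (hP : ∀ k, Measurable (P k)) (N : Finset (Fin K))
    (h_pvar : ∀ k ∈ N, ∀ x ∈ Set.Ioo (0 : ℝ) 1, μ {ω | P k ω ≤ x} ≤ ENNReal.ofReal x)
    (h_prds : PRDS μ P N) :
    ∫ ω, fdp (bhRejects K α (fun k => P k ω)) N ∂μ ≤ α * N.card / K := by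
  obtain ⟨hα0, hα1⟩ := hα
  set R : Ω → ℕ := fun ω => bhCount K α (fun j => P j ω)
  have hR : Measurable R := (measurable_bhCount α).comp (measurable_pi_lambda _ hP)
  have hthreshold : ∀ r < K, α / K * (r + 1) ∈ Set.Ioo (0 : ℝ) 1 := by
    intro r hr
    have hrK : (r : ℝ) + 1 ≤ K := by exact_mod_cast hr
    have hK : (0 : ℝ) < K := by linarith [r.cast_nonneg (α := ℝ)]
    refine ⟨by positivity, ?_⟩
    calc α / K * (r + 1) ≤ α / K * K := by gcongr
      _ = α := div_mul_cancel₀ α hK.ne'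
      _ < 1 := hα1
  have hnull : ∀ k ∈ N,
      ∫ ω, (if P k ω ≤ α / K * R ω then (R ω : ℝ)⁻¹ else 0) ∂μ ≤ α / K := fun k hk =>
    integral_ite_le_mul_inv_le (hP k) hR (by positivity) (fun ω => bhCount_le α _)
      (fun r hr => h_pvar k hk _ (hthreshold r hr)) fun m =>
        h_prds k hk _ (measurable_bhCount α measurableSet_Iic)
          (increasingSet_bhCount_le hα0.le m)
  calc ∫ ω, fdp (bhRejects K α (fun k => P k ω)) N ∂μ
      = ∑ k ∈ N, ∫ ω, (if P k ω ≤ α / K * R ω then (R ω : ℝ)⁻¹ else 0) ∂μ := by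
        simp_rw [fdp_bhRejects hα0.le]
        exact integral_finsetSum _ fun k _ => integrable_ite_le_mul_inv (hP k) hR
    _ ≤ ∑ _k ∈ N, α / K := sum_le_sum hnull
    _ = α * N.card / K := by rw [sum_const, nsmul_eq_mul]; ring

/-- **Theorem 2 (BH under PRDS).** If the p-values satisfy PRDS on the null set, then
the BH procedure at level `α` has FDR at most `α K₀ / K`. -/
theorem bh_fdr_prds
    {Ω : Type*} [MeasurableSpace Ω] (μ : Measure Ω) [IsProbabilityMeasure μ]
    {K : ℕ} (hK : 0 < K) {α : ℝ} (hα : α ∈ Set.Ioo (0 : ℝ) 1)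
    (P : Fin K → Ω → ℝ) (hP : ∀ k, Measurable (P k)) (N : Finset (Fin K))
    (h_pvar : ∀ k ∈ N, ∀ x ∈ Set.Ioo (0 : ℝ) 1, μ {ω | P k ω ≤ x} ≤ ENNReal.ofReal x)
    (h_prds : PRDS μ P N) :
    ∫ ω, fdp (bhRejects K α (fun k => P k ω)) N ∂μ ≤ α * N.card / K :=
  bh_fdr_prds_general μ hα P hP N h_pvar h_prds
end

section
/- If P₁,…,P_K are i.i.d. uniform on [0,1], then the Simes statistic S_K(P) = min_k (K/k)·P_(k) is itself uniformly distributed on [0,1]. -/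
open MeasureTheory ProbabilityTheory Finset
open scoped ENNReal Classical

/-!
Write `b = α / K`. Then `S_K(p) > α` iff for every `k ≤ K` at most `k - 1` of the `p_j` are
`≤ k b`. For `u` uniform on `[0, s]^(m+1)`, split according to which coordinate `u_i` is largest
(ties are null): the event holds iff `u_i > (m+1) b` and the other `m` coordinates, uniform on
`[0, u_i]`, satisfy the same event. So the unnormalised measure `F_m(s)` of the event satisfies
`F_{m+1}(s) = (m+1) ∫_{(m+1)b}^s F_m(t) dt`, whence `F_{m+1}(s) = s^m (s - (m+1) b)`, which is
`1 - α` at `s = 1`, `m + 1 = K`.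
-/

namespace Simes

noncomputable def countLE {n : ℕ} (u : Fin n → ℝ) (c : ℝ) : ℕ := #{j | u j ≤ c}

section Count

variable {n : ℕ}

lemma countLE_eq_sum (u : Fin n → ℝ) (c : ℝ) :
    countLE u c = ∑ j, if u j ≤ c then 1 else 0 :=
  card_filter _ _

lemma countLE_le (u : Fin n → ℝ) (c : ℝ) : countLE u c ≤ n :=
  (card_filter_le _ _).trans (card_fin n).le

lemma measurable_countLE (c : ℝ) : Measurable fun u : Fin n → ℝ => countLE u c := by
  simp only [countLE_eq_sum]
  exact Finset.measurable_sum _ fun j _ =>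
    Measurable.ite (measurableSet_le (measurable_pi_apply j) measurable_const)
      measurable_const measurable_const

lemma countLE_comp_perm (u : Fin n → ℝ) (σ : Equiv.Perm (Fin n)) (c : ℝ) :
    countLE (u ∘ σ) c = countLE u c := by
  simp only [countLE_eq_sum, Function.comp_apply]
  exact Equiv.sum_comp σ fun j => if u j ≤ c then 1 else 0

lemma countLE_succAbove (u : Fin (n + 1) → ℝ) (i : Fin (n + 1)) (c : ℝ) :
    countLE u c = (if u i ≤ c then 1 else 0) + countLE (u ∘ i.succAbove) c := by
  simp only [countLE_eq_sum, Function.comp_apply]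
  exact Fin.sum_univ_succAbove _ i

lemma le_iff_le_countLE_of_monotone {g : Fin n → ℝ} (hg : Monotone g) (i : Fin n) (c : ℝ) :
    g i ≤ c ↔ i.1 + 1 ≤ countLE g c := by
  constructor
  · intro h
    calc i.1 + 1 = #(Iic i) := (Fin.card_Iic i).symm
      _ ≤ countLE g c := card_le_card fun j hj => by
        simpa using (hg (mem_Iic.1 hj)).trans h
  · intro h
    by_contra! hc
    have : countLE g c ≤ #(Iio i) := card_le_card fun j hj => by
      simp only [mem_filter, mem_univ, true_and] at hj
      exact mem_Iio.2 (lt_of_not_ge fun hij => (hj.trans_lt hc).not_ge (hg hij))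
    rw [Fin.card_Iio] at this
    omega

end Count

lemma sortAsc_le_iff {K : ℕ} (p : Fin K → ℝ) (i : Fin K) (c : ℝ) :
    sortAsc p i ≤ c ↔ i.1 + 1 ≤ countLE p c := by
  rw [← countLE_comp_perm p (Tuple.sort p)]
  exact le_iff_le_countLE_of_monotone (Tuple.monotone_sort p) i c

def simesAcceptSet (n : ℕ) (b : ℝ) : Set (Fin n → ℝ) :=
  {u | ∀ i : Fin n, countLE u ((i.1 + 1) * b) ≤ i.1}

lemma measurableSet_simesAcceptSet (n : ℕ) (b : ℝ) : MeasurableSet (simesAcceptSet n b) := by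
  simp only [simesAcceptSet, Set.ofPred_forall]
  exact .iInter fun i => measurableSet_le (measurable_countLE _) measurable_const

lemma ciInf_le_iff_exists {ι α : Type*} [Finite ι] [Nonempty ι]
    [ConditionallyCompleteLinearOrder α] (f : ι → α) (a : α) :
    ⨅ i, f i ≤ a ↔ ∃ i, f i ≤ a := by
  obtain ⟨i, hi⟩ := exists_eq_ciInf_of_finite (f := f)
  exact ⟨fun h => ⟨i, hi ▸ h⟩,
    fun ⟨j, hj⟩ => (ciInf_le (Set.finite_range f).bddBelow j).trans hj⟩

lemma simes_le_iff {K : ℕ} (hK : 0 < K) (p : Fin K → ℝ) (α : ℝ) :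
    simes K p ≤ α ↔ p ∉ simesAcceptSet K (α / K) := by
  have : Nonempty (Fin K) := ⟨⟨0, hK⟩⟩
  have hK' : (0 : ℝ) < K := Nat.cast_pos.2 hK
  have key (i : Fin K) : (K : ℝ) / (i.1 + 1) * sortAsc p i ≤ α ↔
      i.1 + 1 ≤ countLE p ((i.1 + 1) * (α / K)) := by
    rw [← sortAsc_le_iff, div_mul_eq_mul_div, div_le_iff₀ (by positivity), ← mul_div_assoc,
      le_div_iff₀ hK', mul_comm α, mul_comm (K : ℝ)]
  simp only [simes, ciInf_le_iff_exists, key, simesAcceptSet, Set.mem_ofPred_eq, not_forall,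
    not_le, Nat.lt_iff_add_one_le]

lemma mem_simesAcceptSet_succ_iff {m : ℕ} {b : ℝ} (hb : 0 ≤ b) {u : Fin (m + 1) → ℝ}
    {i : Fin (m + 1)} (hmax : ∀ j, u j ≤ u i) :
    u ∈ simesAcceptSet (m + 1) b ↔
      (m + 1) * b < u i ∧ u ∘ i.succAbove ∈ simesAcceptSet m b := by
  have hle (c : ℝ) : countLE (u ∘ i.succAbove) c ≤ countLE u c := by
    rw [countLE_succAbove u i]; exact Nat.le_add_left _ _
  have heq {c : ℝ} (hc : c < u i) : countLE u c = countLE (u ∘ i.succAbove) c := by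
    rw [countLE_succAbove u i, if_neg hc.not_ge, zero_add]
  constructor
  · intro h
    have hi : (m + 1) * b < u i := by
      by_contra! hi
      have hall : countLE u ((m + 1) * b) = m + 1 := by
        rw [countLE, filter_true_of_mem fun j _ => (hmax j).trans hi, card_univ, Fintype.card_fin]
      have := h (Fin.last m)
      simp only [Fin.val_last] at this
      omega
    exact ⟨hi, fun k => (hle _).trans (h k.castSucc)⟩
  · rintro ⟨hi, hrest⟩ k
    have hk : ((k : ℕ) + 1 : ℝ) * b < u i :=
      lt_of_le_of_lt (mul_le_mul_of_nonneg_right (by exact_mod_cast k.isLt) hb) hi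
    rw [heq hk]
    rcases Fin.eq_castSucc_or_eq_last k with ⟨k, rfl⟩ | rfl
    · exact hrest k
    · exact countLE_le _ _

lemma pi_coord_eq_null {m : ℕ} (ν : Measure ℝ) [SigmaFinite ν] [NullSingletonClass ν]
    {i j : Fin (m + 1)} (hij : i ≠ j) : Measure.pi (fun _ => ν) {u | u i = u j} = 0 := by
  obtain ⟨j, rfl⟩ := Fin.exists_succAbove_eq hij.symm
  have hB : MeasurableSet {p : ℝ × (Fin m → ℝ) | p.1 = p.2 j} :=
    measurableSet_eq_fun measurable_fst ((measurable_pi_apply j).comp measurable_snd)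
  change Measure.pi _ (MeasurableEquiv.piFinSuccAbove (fun _ => ℝ) i ⁻¹'
    {p : ℝ × (Fin m → ℝ) | p.1 = p.2 j}) = 0
  rw [(measurePreserving_piFinSuccAbove (fun _ => ν) i).measure_preimage hB.nullMeasurableSet,
    Measure.prod_apply hB]
  have hsection (t : ℝ) : {v : Fin m → ℝ | t = v j} = {v | v j = t} :=
    Set.ext fun _ => eq_comm
  simp [hsection, Measure.pi_hyperplane]

def simesAcceptSetWithMax (m : ℕ) (b : ℝ) : Set (ℝ × (Fin m → ℝ)) :=
  {p | (m + 1) * b < p.1 ∧ (∀ j, p.2 j ≤ p.1) ∧ p.2 ∈ simesAcceptSet m b}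

lemma measurableSet_simesAcceptSetWithMax (m : ℕ) (b : ℝ) :
    MeasurableSet (simesAcceptSetWithMax m b) := by
  simp only [simesAcceptSetWithMax, Set.ofPred_and, Set.ofPred_forall]
  exact (measurableSet_lt measurable_const measurable_fst).inter
    ((MeasurableSet.iInter fun j =>
      measurableSet_le ((measurable_pi_apply j).comp measurable_snd) measurable_fst).inter
        ((measurableSet_simesAcceptSet m b).preimage measurable_snd))

lemma simesAcceptSet_inter_isMax {m : ℕ} {b : ℝ} (hb : 0 ≤ b) (i : Fin (m + 1)) :
    simesAcceptSet (m + 1) b ∩ {u | ∀ j, u j ≤ u i} =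
      MeasurableEquiv.piFinSuccAbove (fun _ => ℝ) i ⁻¹' simesAcceptSetWithMax m b := by
  ext u
  change _ ↔ (u i, u ∘ i.succAbove) ∈ simesAcceptSetWithMax m b
  constructor
  · rintro ⟨hu, hmax⟩
    obtain ⟨hi, hrest⟩ := (mem_simesAcceptSet_succ_iff hb hmax).1 hu
    exact ⟨hi, fun j => hmax _, hrest⟩
  · rintro ⟨hi, hmax, hrest⟩
    have hmax : ∀ j, u j ≤ u i := i.forall_iff_succAbove.2 ⟨le_rfl, hmax⟩
    exact ⟨(mem_simesAcceptSet_succ_iff hb hmax).2 ⟨hi, hrest⟩, hmax⟩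

lemma prod_pi_simesAcceptSetWithMax (m : ℕ) {b : ℝ} (hb : 0 ≤ b) (s : ℝ) :
    (volume.restrict (Set.Icc 0 s)).prod (Measure.pi fun _ => volume.restrict (Set.Icc 0 s))
        (simesAcceptSetWithMax m b) =
      ∫⁻ t in Set.Ioc ((m + 1) * b) s,
        Measure.pi (fun _ : Fin m => volume.restrict (Set.Icc 0 t)) (simesAcceptSet m b) := by
  set ν := volume.restrict (Set.Icc (0 : ℝ) s)
  have hsection (t : ℝ) :
      Measure.pi (fun _ => ν) (Prod.mk t ⁻¹' simesAcceptSetWithMax m b) =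
        (Set.Ioi ((m + 1) * b)).indicator (fun t => Measure.pi (fun _ : Fin m => ν)
          (simesAcceptSet m b ∩ Set.univ.pi fun _ => Set.Iic t)) t := by
    by_cases ht : (m + 1) * b < t
    · rw [Set.indicator_of_mem (Set.mem_Ioi.2 ht)]
      congr 1
      ext v
      simp [simesAcceptSetWithMax, ht, and_comm, Pi.le_def]
    · simp [simesAcceptSetWithMax, ht]
  have hIoc : Set.Ioi ((m + 1) * b) ∩ Set.Icc 0 s = Set.Ioc ((m + 1) * b) s := by
    have : (0 : ℝ) ≤ (m + 1) * b := by positivity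
    ext t; simp only [Set.mem_inter_iff, Set.mem_Ioi, Set.mem_Icc, Set.mem_Ioc]; grind
  rw [Measure.prod_apply (measurableSet_simesAcceptSetWithMax m b)]
  simp only [hsection]
  rw [lintegral_indicator measurableSet_Ioi, Measure.restrict_restrict measurableSet_Ioi, hIoc]
  refine setLIntegral_congr_fun measurableSet_Ioc fun t ht => ?_
  have hIcc : Set.Iic t ∩ Set.Icc 0 s = Set.Icc 0 t := by
    have := ht.2
    ext x; simp only [Set.mem_inter_iff, Set.mem_Iic, Set.mem_Icc]; grind
  rw [← Measure.restrict_apply (measurableSet_simesAcceptSet m b), Measure.restrict_pi_pi]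
  simp only [ν, Measure.restrict_restrict measurableSet_Iic, hIcc]

lemma pi_simesAcceptSet_succ (m : ℕ) {b : ℝ} (hb : 0 ≤ b) (s : ℝ) :
    Measure.pi (fun _ : Fin (m + 1) => volume.restrict (Set.Icc 0 s)) (simesAcceptSet (m + 1) b) =
      (m + 1) * ∫⁻ t in Set.Ioc ((m + 1) * b) s,
        Measure.pi (fun _ : Fin m => volume.restrict (Set.Icc 0 t)) (simesAcceptSet m b) := by
  set ν := volume.restrict (Set.Icc (0 : ℝ) s)
  set A : Fin (m + 1) → Set (Fin (m + 1) → ℝ) :=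
    fun i => simesAcceptSet (m + 1) b ∩ {u | ∀ j, u j ≤ u i}
  have hcover : simesAcceptSet (m + 1) b = ⋃ i, A i := by
    refine (Set.iUnion_subset fun i => Set.inter_subset_left).antisymm' fun u hu => ?_
    obtain ⟨i, hi⟩ := Finite.exists_max u
    exact Set.mem_iUnion.2 ⟨i, hu, hi⟩
  have hdisj : Pairwise (Function.onFun (AEDisjoint (Measure.pi fun _ => ν)) A) := fun i j hij =>
    measure_mono_null (fun u hu => (hu.1.2 j).antisymm (hu.2.2 i)) (pi_coord_eq_null ν hij.symm)
  have hA (i : Fin (m + 1)) : Measure.pi (fun _ => ν) (A i) = ∫⁻ t in Set.Ioc ((m + 1) * b) s,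
      Measure.pi (fun _ : Fin m => volume.restrict (Set.Icc 0 t)) (simesAcceptSet m b) := by
    rw [show A i = _ from simesAcceptSet_inter_isMax hb i,
      (measurePreserving_piFinSuccAbove (fun _ => ν) i).measure_preimage
        (measurableSet_simesAcceptSetWithMax m b).nullMeasurableSet,
      prod_pi_simesAcceptSetWithMax m hb]
  have hmeas (i : Fin (m + 1)) : MeasurableSet (A i) := by
    rw [show A i = _ from simesAcceptSet_inter_isMax hb i]
    exact (measurableSet_simesAcceptSetWithMax m b).preimage (MeasurableEquiv.measurable _)
  rw [hcover, measure_iUnion₀ hdisj fun i => (hmeas i).nullMeasurableSet, tsum_fintype]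
  simp only [hA, sum_const, card_univ, Fintype.card_fin, nsmul_eq_mul, Nat.cast_add, Nat.cast_one]

lemma integral_pow_mul_sub (n : ℕ) (b s : ℝ) :
    ∫ t in (n + 2) * b..s, t ^ n * (t - (n + 1) * b) = s ^ (n + 1) * (s / (n + 2) - b) := by
  have hpoly (t : ℝ) : t ^ n * (t - (n + 1) * b) = t ^ (n + 1) - ((n + 1) * b) * t ^ n := by ring
  simp_rw [hpoly]
  rw [intervalIntegral.integral_sub (intervalIntegral.intervalIntegrable_pow _)
      ((intervalIntegral.intervalIntegrable_pow _).const_mul _),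
    intervalIntegral.integral_const_mul, integral_pow, integral_pow]
  push_cast
  field_simp
  ring

lemma pi_simesAcceptSet (n : ℕ) {b s : ℝ} (hb : 0 ≤ b) (hbs : (n + 1) * b ≤ s) :
    Measure.pi (fun _ : Fin (n + 1) => volume.restrict (Set.Icc 0 s)) (simesAcceptSet (n + 1) b) =
      ENNReal.ofReal (s ^ n * (s - (n + 1) * b)) := by
  induction n generalizing s with
  | zero =>
    have huniv : simesAcceptSet 0 b = Set.univ := Set.eq_univ_of_forall fun _ i => i.elim0
    simp [pi_simesAcceptSet_succ 0 hb, huniv]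
  | succ n ih =>
    have hnn : ∀ t ∈ Set.Ioc ((n + 2) * b) s, 0 ≤ t ^ n * (t - (n + 1) * b) := fun t ht => by
      have : 0 ≤ (n + 1) * b := by positivity
      exact mul_nonneg (pow_nonneg (by linarith [ht.1]) n) (by linarith [ht.1])
    have hcast : ((n + 1 : ℕ) : ℝ) + 1 = n + 2 := by push_cast; ring
    rw [hcast] at hbs ⊢
    have hcont : Continuous fun t : ℝ => t ^ n * (t - (n + 1) * b) := by fun_prop
    rw [pi_simesAcceptSet_succ (n + 1) hb, hcast, setLIntegral_congr_fun measurableSet_Ioc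
      fun t ht => ih (by linarith [ht.1]),
      ← ofReal_integral_eq_lintegral_ofReal hcont.integrableOn_Ioc
        (ae_restrict_of_forall_mem measurableSet_Ioc hnn),
      ← intervalIntegral.integral_of_le hbs, integral_pow_mul_sub, ← Nat.cast_add_one,
      ← ENNReal.ofReal_natCast, ← ENNReal.ofReal_mul (by positivity)]
    congr 1
    push_cast
    field_simp
    ring

end Simes

open Simes in
/-- If `P_1, …, P_K` are i.i.d. uniform on `[0,1]`, the Simes statistic
`S_K(P) = min_k (K/k) P_(k)` is itself uniform on `[0,1]`. -/
theorem simes_uniform_iid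
    {Ω : Type*} [MeasurableSpace Ω] (μ : Measure Ω) [IsProbabilityMeasure μ]
    {K : ℕ} (hK : 0 < K)
    (P : Fin K → Ω → ℝ) (hP : ∀ k, Measurable (P k))
    (h_indep : iIndepFun P μ)
    (h_unif : ∀ k, μ.map (P k) = volume.restrict (Set.Icc (0 : ℝ) 1)) :
    ∀ α ∈ Set.Icc (0 : ℝ) 1,
      μ {ω | simes K (fun j => P j ω) ≤ α} = ENNReal.ofReal α := by
  rintro α ⟨hα₀, hα₁⟩
  obtain ⟨n, rfl⟩ : ∃ n, K = n + 1 := Nat.exists_eq_add_one.2 hK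
  have hlaw : μ.map (fun ω j => P j ω) = Measure.pi fun _ => volume.restrict (Set.Icc 0 1) := by
    rw [h_indep.map_fun_eq_pi_map fun k => (hP k).aemeasurable, funext h_unif]
  have hnα : ((n : ℝ) + 1) * (α / (n + 1 : ℕ)) = α := by
    push_cast
    field_simp
  have hevent : {ω | simes (n + 1) (fun j => P j ω) ≤ α} =
      ((fun ω j => P j ω) ⁻¹' simesAcceptSet (n + 1) (α / (n + 1 : ℕ)))ᶜ := by
    ext ω
    exact simes_le_iff hK _ α
  rw [hevent, prob_compl_eq_one_sub ((measurableSet_simesAcceptSet _ _).preimage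
      (measurable_pi_lambda _ hP)),
    ← Measure.map_apply (measurable_pi_lambda _ hP) (measurableSet_simesAcceptSet _ _), hlaw,
    pi_simesAcceptSet n (by positivity) (by rw [hnα]; exact hα₁), hnα, one_pow, one_mul,
    ← ENNReal.ofReal_one, ← ENNReal.ofReal_sub _ (sub_nonneg.2 hα₁), sub_sub_cancel]
end

section
/- For arbitrary (arbitrarily dependent) e-values, the e-BH procedure at level α ∈ (0,1) has FDR at most α·K₀/K. -/
open MeasureTheory ProbabilityTheory Finset
open scoped ENNReal Classical

lemma sortDesc_antitone {K : ℕ} (e : Fin K → ℝ) : Antitone (sortDesc e) := by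
  intro i j hij
  have := Tuple.monotone_sort (fun j => -e j) hij
  simp only [Function.comp_apply] at this
  simpa [sortDesc] using this

lemma fdp_nonneg {K : ℕ} (D N : Finset (Fin K)) : 0 ≤ fdp D N := by
  unfold fdp; positivity

lemma ebh_key {K : ℕ} (hK : 0 < K) {α : ℝ} (hα0 : 0 < α) (e : Fin K → ℝ)
    (he : ∀ k, 0 ≤ e k) (N : Finset (Fin K)) :
    fdp (ebhRejects K α e) N ≤ α / K * ∑ k ∈ N, e k := by
  set D := ebhRejects K α e with hD
  set R := ebhCount K α e with hR
  have hsumN : 0 ≤ ∑ k ∈ N, e k := Finset.sum_nonneg fun k _ => he k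
  by_cases hDN : (D ∩ N) = ∅
  · rw [fdp, hDN]
    simp only [Finset.card_empty, Nat.cast_zero, zero_div]
    positivity
  -- D ∩ N nonempty
  obtain ⟨k0, hk0⟩ := Finset.nonempty_iff_ne_empty.2 hDN
  have hk0D : k0 ∈ D := (Finset.mem_inter.1 hk0).1
  obtain ⟨i1, hi1, _⟩ := (Finset.mem_filter.1 hk0D).2
  have hR1 : 1 ≤ R := le_trans (Nat.succ_le_succ (Nat.zero_le _)) hi1
  -- sup attained
  have hsne : (univ.filter (fun i : Fin K => 1 / α ≤ (i.1 + 1) * sortDesc e i / K)).Nonempty := by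
    by_contra h
    rw [Finset.not_nonempty_iff_eq_empty] at h
    rw [hR, ebhCount, h] at hR1
    simp at hR1
  obtain ⟨i0, hi0mem, hi0⟩ := Finset.exists_mem_eq_sup _ hsne (fun i : Fin K => i.1 + 1)
  have hi0R : R = i0.1 + 1 := hi0
  have hi0cond : 1 / α ≤ (i0.1 + 1) * sortDesc e i0 / K := (Finset.mem_filter.1 hi0mem).2
  have hRK : R ≤ K := by rw [hi0R]; exact i0.2
  -- card D ≥ R
  have hcard : R ≤ D.card := by
    have := Finset.card_le_card_of_injOn
      (f := fun i : Fin R => (Tuple.sort (fun j => -e j)) ⟨i.1, lt_of_lt_of_le i.2 hRK⟩)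
      (s := (Finset.univ : Finset (Fin R))) (t := D)
      (fun i _ => Finset.mem_filter.2 ⟨Finset.mem_univ _,
        ⟨⟨i.1, lt_of_lt_of_le i.2 hRK⟩, i.2, le_refl _⟩⟩)
      (fun a _ b _ h => by
        have h1 := (Tuple.sort (fun j => -e j)).injective h
        have h2 : a.1 = b.1 := by simpa using h1
        exact Fin.ext h2)
    simpa using this
  have hcardmax : R ≤ max D.card 1 := le_trans hcard (le_max_left _ _)
  have hmaxpos : (0 : ℝ) < (max D.card 1 : ℕ) := by
    have : 1 ≤ max D.card 1 := le_max_right _ _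
    exact_mod_cast Nat.lt_of_lt_of_le Nat.zero_lt_one this
  -- pointwise bound for each k ∈ D
  have hkey : ∀ k ∈ D ∩ N, (1 : ℝ) / (max D.card 1 : ℕ) ≤ α / K * e k := by
    intro k hk
    obtain ⟨i, hiR, hile⟩ := (Finset.mem_filter.1 (Finset.mem_inter.1 hk).1).2
    have hii0 : i ≤ i0 := by
      have : i.1 ≤ i0.1 := Nat.lt_succ_iff.1 (by omega)
      exact this
    have h1 : sortDesc e i0 ≤ e k := le_trans (sortDesc_antitone e hii0) hile
    have hKpos : (0 : ℝ) < K := by exact_mod_cast hK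
    -- from hi0cond: K ≤ α * R * sortDesc e i0
    have h2 : (K : ℝ) ≤ α * (R : ℝ) * sortDesc e i0 := by
      have := hi0cond
      rw [div_le_div_iff₀ hα0 hKpos] at this
      have hR' : ((i0.1 : ℝ) + 1) = (R : ℝ) := by rw [hi0R]; push_cast; ring
      nlinarith [this]
    have h3 : (K : ℝ) ≤ α * ((max D.card 1 : ℕ) : ℝ) * e k := by
      have hek : 0 ≤ e k := he k
      have hRpos : (0:ℝ) < (R:ℝ) := by exact_mod_cast Nat.lt_of_lt_of_le Nat.zero_lt_one hR1
      have hs0 : 0 ≤ sortDesc e i0 := by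
        nlinarith [mul_pos hα0 hRpos]
      have hRle : (R : ℝ) ≤ ((max D.card 1 : ℕ) : ℝ) := by exact_mod_cast hcardmax
      nlinarith [mul_le_mul_of_nonneg_left h1 (mul_nonneg hα0.le hRpos.le),
        mul_le_mul_of_nonneg_right (mul_le_mul_of_nonneg_left hRle hα0.le) hek]
    rw [div_le_iff₀ hmaxpos, div_mul_eq_mul_div, div_mul_eq_mul_div, le_div_iff₀ hKpos]
    nlinarith
  calc fdp D N = ∑ k ∈ D ∩ N, (1 : ℝ) / (max D.card 1 : ℕ) := by
        rw [fdp, Finset.sum_const, nsmul_eq_mul]; ring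
    _ ≤ ∑ k ∈ D ∩ N, α / K * e k := Finset.sum_le_sum hkey
    _ ≤ ∑ k ∈ N, α / K * e k := by
        refine Finset.sum_le_sum_of_subset_of_nonneg (Finset.inter_subset_right) ?_
        intro k _ _
        have := he k
        have hKpos : (0 : ℝ) < K := by exact_mod_cast hK
        positivity
    _ = α / K * ∑ k ∈ N, e k := by rw [Finset.mul_sum]

lemma ebh_fdr' {Ω : Type*} [MeasurableSpace Ω] (μ : MeasureTheory.Measure Ω)
    [MeasureTheory.IsProbabilityMeasure μ]
    {K : ℕ} (hK : 0 < K) {α : ℝ} (hα : α ∈ Set.Ioo (0 : ℝ) 1)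
    (E : Fin K → Ω → ℝ) (hE : ∀ k, Measurable (E k))
    (hE0 : ∀ k ω, 0 ≤ E k ω) (N : Finset (Fin K))
    (h_evar : ∀ k ∈ N, ∫⁻ ω, ENNReal.ofReal (E k ω) ∂μ ≤ 1) :
    ∫ ω, fdp (ebhRejects K α (fun k => E k ω)) N ∂μ ≤ α * N.card / K := by
  have hα0 := hα.1
  have hKpos : (0 : ℝ) < K := by exact_mod_cast hK
  have hint : ∀ k ∈ N, MeasureTheory.Integrable (E k) μ := by
    intro k hk
    refine ⟨(hE k).aestronglyMeasurable, ?_⟩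
    rw [MeasureTheory.hasFiniteIntegral_iff_ofReal (Filter.Eventually.of_forall (hE0 k))]
    exact lt_of_le_of_lt (h_evar k hk) ENNReal.one_lt_top
  have hgint : MeasureTheory.Integrable (fun ω => α / K * ∑ k ∈ N, E k ω) μ :=
    (MeasureTheory.integrable_finset_sum N (fun k hk => hint k hk)).const_mul _
  have step1 : ∫ ω, fdp (ebhRejects K α (fun k => E k ω)) N ∂μ
      ≤ ∫ ω, α / K * ∑ k ∈ N, E k ω ∂μ := by
    refine MeasureTheory.integral_mono_of_nonneg
      (Filter.Eventually.of_forall (fun ω => fdp_nonneg _ _)) hgint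
      (Filter.Eventually.of_forall (fun ω => ?_))
    exact ebh_key hK hα0 (fun k => E k ω) (fun k => hE0 k ω) N
  refine le_trans step1 ?_
  rw [MeasureTheory.integral_const_mul, MeasureTheory.integral_finset_sum N (fun k hk => hint k hk)]
  have hEk : ∀ k ∈ N, ∫ ω, E k ω ∂μ ≤ 1 := by
    intro k hk
    rw [MeasureTheory.integral_eq_lintegral_of_nonneg_ae
      (Filter.Eventually.of_forall (hE0 k)) (hE k).aestronglyMeasurable]
    calc (∫⁻ ω, ENNReal.ofReal (E k ω) ∂μ).toReal ≤ (1 : ENNReal).toReal :=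
          ENNReal.toReal_mono ENNReal.one_ne_top (h_evar k hk)
      _ = 1 := by simp
  have hsum : ∑ k ∈ N, ∫ ω, E k ω ∂μ ≤ (N.card : ℝ) := by
    calc ∑ k ∈ N, ∫ ω, E k ω ∂μ ≤ ∑ k ∈ N, (1 : ℝ) := Finset.sum_le_sum hEk
      _ = N.card := by simp
  have h2 : α / K * ∑ k ∈ N, ∫ ω, E k ω ∂μ ≤ α / K * N.card := by
    refine mul_le_mul_of_nonneg_left hsum (by positivity)
  calc α / ↑K * ∑ k ∈ N, ∫ ω, E k ω ∂μ ≤ α / K * N.card := h2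
    _ = α * N.card / K := by ring

/-- **Theorem 3 (e-BH).** For arbitrarily dependent e-values, the e-BH procedure at level
`α ∈ (0,1)` has FDR at most `α K₀ / K`. -/
theorem ebh_fdr
    {Ω : Type*} [MeasurableSpace Ω] (μ : Measure Ω) [IsProbabilityMeasure μ]
    {K : ℕ} (hK : 0 < K) {α : ℝ} (hα : α ∈ Set.Ioo (0 : ℝ) 1)
    (E : Fin K → Ω → ℝ) (hE : ∀ k, Measurable (E k))
    (hE0 : ∀ k ω, 0 ≤ E k ω) (N : Finset (Fin K))
    (h_evar : ∀ k ∈ N, ∫⁻ ω, ENNReal.ofReal (E k ω) ∂μ ≤ 1) :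
    ∫ ω, fdp (ebhRejects K α (fun k => E k ω)) N ∂μ ≤ α * N.card / K := by
  exact ebh_fdr' μ hK hα E hE hE0 N h_evar
end

section
/- Any self-consistent e-testing procedure 𝒟, i.e., one satisfying E_k ≥ K/(α·R_𝒟) for every rejected index k ∈ 𝒟, has FDR at most α·K₀/K for arbitrary e-values; moreover its FDP satisfies the pointwise bound F_𝒟/(R_𝒟 ∨ 1) ≤ (α/K)·Σ_{k∈𝒩} E_k. -/
open MeasureTheory ProbabilityTheory Finset
open scoped ENNReal Classical

/-- Any self-consistent e-testing procedure (one rejecting only `k` with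
`E_k ≥ K/(α R_𝒟)`) has FDP at most `(α/K) ∑_{k ∈ 𝒩} E_k` pointwise, and hence FDR at
most `α K₀ / K` for arbitrary e-values. -/
theorem self_consistent_fdr
    {Ω : Type*} [MeasurableSpace Ω] (μ : Measure Ω) [IsProbabilityMeasure μ]
    {K : ℕ} (hK : 0 < K) {α : ℝ} (hα : α ∈ Set.Ioo (0 : ℝ) 1)
    (E : Fin K → Ω → ℝ) (hE : ∀ k, Measurable (E k))
    (hE0 : ∀ k ω, 0 ≤ E k ω) (N : Finset (Fin K))
    (h_evar : ∀ k ∈ N, ∫⁻ ω, ENNReal.ofReal (E k ω) ∂μ ≤ 1)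
    (D : Ω → Finset (Fin K))
    (h_sc : ∀ ω, ∀ k ∈ D ω, (K : ℝ) ≤ α * (D ω).card * E k ω)
    (h_meas : Measurable (fun ω => fdp (D ω) N)) :
    (∀ ω, fdp (D ω) N ≤ α / K * ∑ k ∈ N, E k ω) ∧
      ∫ ω, fdp (D ω) N ∂μ ≤ α * N.card / K := by

  obtain ⟨hα0, hα1⟩ := hα
  have hKpos : (0:ℝ) < K := Nat.cast_pos.mpr hK
  have hpt : ∀ ω, fdp (D ω) N ≤ α / K * ∑ k ∈ N, E k ω := by
    intro ω
    have hsumnn : (0:ℝ) ≤ ∑ k ∈ N, E k ω :=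
      Finset.sum_nonneg fun k _ => hE0 k ω
    by_cases hD : (D ω).card = 0
    · have hDe : D ω = ∅ := Finset.card_eq_zero.mp hD
      have : fdp (D ω) N = 0 := by simp [fdp, hDe]
      rw [this]; positivity
    · have hR : 0 < (D ω).card := Nat.pos_of_ne_zero hD
      have hRr : (0:ℝ) < ((D ω).card : ℝ) := by exact_mod_cast hR
      have hEk : ∀ k ∈ D ω ∩ N, (K:ℝ)/(α * (D ω).card) ≤ E k ω := by
        intro k hk
        have hk' := h_sc ω k (Finset.mem_inter.mp hk).1
        rw [div_le_iff₀ (by positivity)]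
        nlinarith
      have hsum : ((D ω ∩ N).card : ℝ) * ((K:ℝ)/(α * (D ω).card))
          ≤ ∑ k ∈ N, E k ω := by
        calc ((D ω ∩ N).card : ℝ) * ((K:ℝ)/(α * (D ω).card))
            = ∑ _k ∈ D ω ∩ N, (K:ℝ)/(α * (D ω).card) := by
              rw [Finset.sum_const, nsmul_eq_mul]
          _ ≤ ∑ k ∈ D ω ∩ N, E k ω := Finset.sum_le_sum hEk
          _ ≤ ∑ k ∈ N, E k ω :=
              Finset.sum_le_sum_of_subset_of_nonneg Finset.inter_subset_right
                (fun k _ _ => hE0 k ω)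
      have hfdp : fdp (D ω) N = ((D ω ∩ N).card : ℝ) / ((D ω).card : ℝ) := by
        unfold fdp
        rw [max_eq_left hR]
      rw [hfdp, div_le_iff₀ hRr]
      have := mul_le_mul_of_nonneg_left hsum (le_of_lt (div_pos hα0 hKpos))
      calc ((D ω ∩ N).card : ℝ)
          = α / K * (((D ω ∩ N).card : ℝ) * ((K:ℝ)/(α * (D ω).card))) * ((D ω).card : ℝ) := by
            field_simp
        _ ≤ α / K * (∑ k ∈ N, E k ω) * ((D ω).card : ℝ) := by
            apply mul_le_mul_of_nonneg_right _ (le_of_lt hRr)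
            exact this
  refine ⟨hpt, ?_⟩
  have hfdpnn : ∀ ω, 0 ≤ fdp (D ω) N := by
    intro ω; unfold fdp; positivity
  rw [MeasureTheory.integral_eq_lintegral_of_nonneg_ae
    (Filter.Eventually.of_forall hfdpnn) h_meas.aestronglyMeasurable]
  have hbound : ∫⁻ ω, ENNReal.ofReal (fdp (D ω) N) ∂μ
      ≤ ENNReal.ofReal (α / K) * N.card := by
    calc ∫⁻ ω, ENNReal.ofReal (fdp (D ω) N) ∂μ
        ≤ ∫⁻ ω, ENNReal.ofReal (α / K * ∑ k ∈ N, E k ω) ∂μ := by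
          apply MeasureTheory.lintegral_mono
          intro ω
          exact ENNReal.ofReal_le_ofReal (hpt ω)
      _ = ∫⁻ ω, ENNReal.ofReal (α / K) * ENNReal.ofReal (∑ k ∈ N, E k ω) ∂μ := by
          congr 1; funext ω
          rw [ENNReal.ofReal_mul (by positivity)]
      _ = ENNReal.ofReal (α / K) * ∫⁻ ω, ENNReal.ofReal (∑ k ∈ N, E k ω) ∂μ := by
          rw [MeasureTheory.lintegral_const_mul]
          exact (Finset.measurable_sum N fun k _ => hE k).ennreal_ofReal
      _ ≤ ENNReal.ofReal (α / K) * ∑ k ∈ N, ∫⁻ ω, ENNReal.ofReal (E k ω) ∂μ := by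
          apply mul_le_mul_right
          apply le_of_eq
          calc ∫⁻ ω, ENNReal.ofReal (∑ k ∈ N, E k ω) ∂μ
              = ∫⁻ ω, ∑ k ∈ N, ENNReal.ofReal (E k ω) ∂μ := by
                congr 1; funext ω
                exact ENNReal.ofReal_sum_of_nonneg fun k _ => hE0 k ω
            _ = ∑ k ∈ N, ∫⁻ ω, ENNReal.ofReal (E k ω) ∂μ :=
                MeasureTheory.lintegral_finset_sum N fun k _ => (hE k).ennreal_ofReal
      _ ≤ ENNReal.ofReal (α / K) * ∑ _k ∈ N, (1:ℝ≥0∞) := by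
          gcongr with k hk
          exact h_evar k hk
      _ = ENNReal.ofReal (α / K) * N.card := by simp
  have htop : ENNReal.ofReal (α / K) * (N.card : ℝ≥0∞) ≠ ⊤ := by
    exact ENNReal.mul_ne_top ENNReal.ofReal_ne_top (ENNReal.natCast_ne_top _)
  calc (∫⁻ ω, ENNReal.ofReal (fdp (D ω) N) ∂μ).toReal
      ≤ (ENNReal.ofReal (α / K) * N.card).toReal :=
        ENNReal.toReal_mono htop hbound
    _ = α / K * N.card := by
        rw [ENNReal.toReal_mul, ENNReal.toReal_ofReal (by positivity)]
        simp
    _ = α * N.card / K := by ring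
end

section
/- (Benjamini–Yekutieli) For arbitrarily dependent p-values, the BH procedure at level α ∈ (0,1) has FDR at most ℓ_K·α·K₀/K, where ℓ_K = Σ_{k=1}^K 1/k. -/
open MeasureTheory ProbabilityTheory Finset
open scoped ENNReal Classical

/-! For `k ∈ D = bhRejects K α p` one has `p k ≤ c R` with `c = α / K` and `R = #D ∈ [1, K]`,
so the FDP is at most `∑_{k ∈ N} 1{P k ≤ c R} / R`. Writing `1 / R = ∑_{j=R}^K w j` with the
nonnegative telescoping weights `w j = 1/j - 1/(j+1)` (`w K = 1/K`) dominates each summand by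
`∑_{j=1}^K w j 1{P k ≤ c j}`, which no longer depends on the random `R`. For a p-variable its
mean is at most `∑_j w j c j = c ℓ_K`, by summation by parts. -/

lemma sum_Icc_natCast_mul_sub_succ {R : Type*} [CommRing R] (g : ℕ → R) (n : ℕ) :
    ∑ j ∈ Icc 1 n, (j : R) * (g j - g (j + 1)) = ∑ j ∈ Icc 1 n, g j - n * g (n + 1) := by
  induction n with
  | zero => simp
  | succ n ih =>
    rw [sum_Icc_succ_top (by omega), sum_Icc_succ_top (by omega), ih]
    push_cast
    ring

noncomputable def truncInv (K j : ℕ) : ℝ := if j ≤ K then 1 / j else 0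

lemma truncInv_sub_succ_nonneg {K j : ℕ} (hj : 1 ≤ j) :
    0 ≤ truncInv K j - truncInv K (j + 1) := by
  rw [sub_nonneg]
  unfold truncInv
  split_ifs with h₁ h₂
  · gcongr; simp
  · omega
  · positivity
  · rfl

lemma sum_Icc_truncInv_sub_succ {K R : ℕ} (hR : R ≤ K) :
    ∑ j ∈ Icc R K, (truncInv K j - truncInv K (j + 1)) = 1 / R := by
  have h := sum_Ico_sub (fun j => -truncInv K j) (show R ≤ K + 1 by omega)
  rw [Ico_add_one_right_eq_Icc] at h
  simp only [neg_sub_neg] at h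
  rw [h, truncInv, truncInv, if_pos hR, if_neg (by omega), sub_zero]

lemma sum_Icc_natCast_mul_truncInv_sub_succ (K : ℕ) :
    ∑ j ∈ Icc 1 K, (j : ℝ) * (truncInv K j - truncInv K (j + 1)) = harm K := by
  rw [sum_Icc_natCast_mul_sub_succ, harm, truncInv, if_neg (by omega), mul_zero, sub_zero]
  exact sum_congr rfl fun j hj => if_pos (mem_Icc.mp hj).2

noncomputable def byMajorant (c : ℝ) (K : ℕ) (x : ℝ) : ℝ :=
  ∑ j ∈ Icc 1 K, (truncInv K j - truncInv K (j + 1)) * (Set.Iic (c * j)).indicator 1 x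

lemma byMajorant_nonneg (c : ℝ) (K : ℕ) (x : ℝ) : 0 ≤ byMajorant c K x :=
  sum_nonneg fun _ hj => mul_nonneg (truncInv_sub_succ_nonneg (mem_Icc.mp hj).1)
    (Set.indicator_nonneg (fun _ _ => zero_le_one) x)

lemma one_div_le_byMajorant {c x : ℝ} {K R : ℕ} (hc : 0 ≤ c) (hR : 1 ≤ R) (hRK : R ≤ K)
    (hx : x ≤ c * R) : 1 / (R : ℝ) ≤ byMajorant c K x := by
  calc 1 / (R : ℝ) = ∑ j ∈ Icc R K, (truncInv K j - truncInv K (j + 1)) :=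
        (sum_Icc_truncInv_sub_succ hRK).symm
    _ = ∑ j ∈ Icc R K,
          (truncInv K j - truncInv K (j + 1)) * (Set.Iic (c * j)).indicator 1 x := by
        refine sum_congr rfl fun j hj => ?_
        have hxj : x ≤ c * j := hx.trans (by gcongr; exact_mod_cast (mem_Icc.mp hj).1)
        rw [Set.indicator_of_mem (Set.mem_Iic.mpr hxj), Pi.one_apply, mul_one]
    _ ≤ byMajorant c K x := by
        refine sum_le_sum_of_subset_of_nonneg (Icc_subset_Icc_left hR) fun j hj _ => ?_
        exact mul_nonneg (truncInv_sub_succ_nonneg (mem_Icc.mp hj).1)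
          (Set.indicator_nonneg (fun _ _ => zero_le_one) x)

lemma byMajorant_comp_eq {Ω : Type*} (c : ℝ) (K : ℕ) (f : Ω → ℝ) :
    (fun ω => byMajorant c K (f ω)) = fun ω =>
      ∑ j ∈ Icc 1 K, (truncInv K j - truncInv K (j + 1)) * {ω | f ω ≤ c * j}.indicator 1 ω := by
  ext ω
  refine sum_congr rfl fun j _ => ?_
  rw [← Set.indicator_comp_right f]
  rfl

section Integral

variable {Ω : Type*} [MeasurableSpace Ω] {μ : Measure Ω} {f : Ω → ℝ} (c : ℝ) (K : ℕ)

lemma integrable_byMajorant_comp [IsFiniteMeasure μ] (hf : Measurable f) :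
    Integrable (fun ω => byMajorant c K (f ω)) μ := by
  rw [byMajorant_comp_eq]
  exact integrable_finsetSum _ fun j _ => ((integrable_const 1).indicator
    (measurableSet_le hf measurable_const)).const_mul _

lemma integral_byMajorant_comp_le [IsFiniteMeasure μ] (hf : Measurable f)
    (h : ∀ j ∈ Icc 1 K, μ.real {ω | f ω ≤ c * j} ≤ c * j) :
    ∫ ω, byMajorant c K (f ω) ∂μ ≤ c * harm K := by
  have hmeas (j : ℕ) : MeasurableSet {ω | f ω ≤ c * j} := measurableSet_le hf measurable_const
  rw [byMajorant_comp_eq, integral_finsetSum _ fun j _ =>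
    ((integrable_const 1).indicator (hmeas j)).const_mul _]
  simp only [integral_const_mul, integral_indicator_one (hmeas _)]
  calc ∑ j ∈ Icc 1 K, (truncInv K j - truncInv K (j + 1)) * μ.real {ω | f ω ≤ c * j}
      ≤ ∑ j ∈ Icc 1 K, (truncInv K j - truncInv K (j + 1)) * (c * j) :=
        sum_le_sum fun j hj => mul_le_mul_of_nonneg_left (h j hj)
          (truncInv_sub_succ_nonneg (mem_Icc.mp hj).1)
    _ = c * harm K := by
        rw [← sum_Icc_natCast_mul_truncInv_sub_succ, mul_sum]
        exact sum_congr rfl fun j _ => by ring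

end Integral

section BH

variable {K : ℕ} {α : ℝ} {p : Fin K → ℝ}

lemma exists_bhCount_eq (h : 1 ≤ bhCount K α p) :
    ∃ i : Fin K, i.1 + 1 = bhCount K α p ∧ (K : ℝ) * sortAsc p i / (i.1 + 1) ≤ α := by
  obtain hne | hne :=
    (univ.filter (fun i : Fin K => (K : ℝ) * sortAsc p i / (i.1 + 1) ≤ α)).eq_empty_or_nonempty
  · simp [bhCount, hne] at h
  · obtain ⟨i, hi, hsup⟩ := exists_mem_eq_sup _ hne (fun i : Fin K => i.1 + 1)
    exact ⟨i, hsup.symm, (mem_filter.mp hi).2⟩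

lemma mem_bhRejects_iff {i₀ : Fin K} (hi₀ : i₀.1 + 1 = bhCount K α p) (k : Fin K) :
    k ∈ bhRejects K α p ↔ p k ≤ sortAsc p i₀ := by
  simp only [bhRejects, mem_filter, mem_univ, true_and]
  refine ⟨fun ⟨i, hi, hk⟩ => hk.trans (Tuple.monotone_sort p ?_), fun hk => ⟨i₀, hi₀.le, hk⟩⟩
  exact Fin.le_def.mpr (by omega)

lemma bhCount_le_card_bhRejects : bhCount K α p ≤ #(bhRejects K α p) := by
  rcases Nat.eq_zero_or_pos (bhCount K α p) with h | h
  · simp [h]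
  obtain ⟨i₀, hi₀, -⟩ := exists_bhCount_eq h
  have hsub : (Iic i₀).image (Tuple.sort p) ⊆ bhRejects K α p := fun k hk => by
    obtain ⟨i, hi, rfl⟩ := mem_image.mp hk
    exact (mem_bhRejects_iff hi₀ _).mpr (Tuple.monotone_sort p (mem_Iic.mp hi))
  calc bhCount K α p = #((Iic i₀).image (Tuple.sort p)) := by
        rw [card_image_of_injective _ (Tuple.sort p).injective, Fin.card_Iic, hi₀]
    _ ≤ _ := card_le_card hsub

lemma le_mul_card_bhRejects (hα : 0 ≤ α) {k : Fin K} (hk : k ∈ bhRejects K α p) :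
    p k ≤ α / K * #(bhRejects K α p) := by
  have hK : (0 : ℝ) < K := by exact_mod_cast k.pos
  obtain ⟨i, hi, -⟩ := (mem_filter.mp hk).2
  obtain ⟨i₀, hi₀, hle⟩ := exists_bhCount_eq (α := α) (p := p) (by omega)
  have hcount : (bhCount K α p : ℝ) ≤ #(bhRejects K α p) := by
    exact_mod_cast bhCount_le_card_bhRejects
  calc p k ≤ sortAsc p i₀ := (mem_bhRejects_iff hi₀ k).mp hk
    _ ≤ α / K * bhCount K α p := by
        rw [← hi₀]
        push_cast
        rw [div_le_iff₀ (by positivity)] at hle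
        rw [div_mul_eq_mul_div, le_div_iff₀ hK]
        linarith
    _ ≤ α / K * #(bhRejects K α p) := by gcongr

end BH

lemma fdp_eq_sum {K : ℕ} (D N : Finset (Fin K)) :
    fdp D N = ∑ _k ∈ D ∩ N, (1 : ℝ) / #D := by
  rcases D.eq_empty_or_nonempty with rfl | hD
  · simp [fdp]
  · rw [fdp, max_eq_left hD.card_pos, sum_const, nsmul_eq_mul, mul_one_div]

lemma fdp_le_sum {K : ℕ} {D N : Finset (Fin K)} {g : Fin K → ℝ} (hg : ∀ k ∈ N, 0 ≤ g k)
    (hD : ∀ k ∈ D ∩ N, 1 / (#D : ℝ) ≤ g k) : fdp D N ≤ ∑ k ∈ N, g k := by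
  rw [fdp_eq_sum]
  exact (sum_le_sum hD).trans
    (sum_le_sum_of_subset_of_nonneg inter_subset_right fun k hk _ => hg k hk)

lemma fdp_bhRejects_le_sum_byMajorant {K : ℕ} {α : ℝ} (hα : 0 ≤ α) (p : Fin K → ℝ)
    (N : Finset (Fin K)) : fdp (bhRejects K α p) N ≤ ∑ k ∈ N, byMajorant (α / K) K (p k) := by
  refine fdp_le_sum (fun k _ => byMajorant_nonneg _ _ _) fun k hk => ?_
  have hkD := (mem_inter.mp hk).1
  exact one_div_le_byMajorant (by positivity) (card_pos.mpr ⟨k, hkD⟩)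
    ((card_le_univ _).trans_eq (Fintype.card_fin K)) (le_mul_card_bhRejects hα hkD)

theorem by_fdr_general
    {Ω : Type*} [MeasurableSpace Ω] (μ : Measure Ω) [IsProbabilityMeasure μ]
    {K : ℕ} {α : ℝ} (hα : α ∈ Set.Ioo (0 : ℝ) 1)
    (P : Fin K → Ω → ℝ) (hP : ∀ k, Measurable (P k)) (N : Finset (Fin K))
    (h_pvar : ∀ k ∈ N, ∀ x ∈ Set.Ioo (0 : ℝ) 1, μ {ω | P k ω ≤ x} ≤ ENNReal.ofReal x) :
    ∫ ω, fdp (bhRejects K α (fun k => P k ω)) N ∂μ ≤ harm K * α * N.card / K := by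
  obtain ⟨hα₀, hα₁⟩ := hα
  have hnull (k : Fin K) (hk : k ∈ N) (j : ℕ) (hj : j ∈ Icc 1 K) :
      μ.real {ω | P k ω ≤ α / K * j} ≤ α / K * j := by
    obtain ⟨hj₁, hjK⟩ := mem_Icc.mp hj
    have hK : (0 : ℝ) < K := by exact_mod_cast (by omega : 0 < K)
    have hpos : 0 < α / K * j := mul_pos (div_pos hα₀ hK) (by exact_mod_cast hj₁)
    have hle : α / K * j ≤ α := by
      rw [div_mul_eq_mul_div, div_le_iff₀ hK]
      exact mul_le_mul_of_nonneg_left (by exact_mod_cast hjK) hα₀.le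
    exact ENNReal.toReal_le_of_le_ofReal hpos.le (h_pvar k hk _ ⟨hpos, hle.trans_lt hα₁⟩)
  have hint (k : Fin K) : Integrable (fun ω => byMajorant (α / K) K (P k ω)) μ :=
    integrable_byMajorant_comp _ _ (hP k)
  calc ∫ ω, fdp (bhRejects K α (fun k => P k ω)) N ∂μ
      ≤ ∫ ω, ∑ k ∈ N, byMajorant (α / K) K (P k ω) ∂μ :=
        integral_mono_of_nonneg (.of_forall fun _ => fdp_nonneg _ _)
          (integrable_finsetSum _ fun k _ => hint k)
          (.of_forall fun ω => fdp_bhRejects_le_sum_byMajorant hα₀.le _ N)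
    _ = ∑ k ∈ N, ∫ ω, byMajorant (α / K) K (P k ω) ∂μ := integral_finsetSum _ fun k _ => hint k
    _ ≤ ∑ _k ∈ N, α / K * harm K :=
        sum_le_sum fun k hk => integral_byMajorant_comp_le _ _ (hP k) (hnull k hk)
    _ = harm K * α * N.card / K := by rw [sum_const, nsmul_eq_mul]; ring

/-- **Theorem 4 (Benjamini–Yekutieli).** For arbitrarily dependent p-values, the BH
procedure at level `α ∈ (0,1)` has FDR at most `ℓ_K α K₀ / K`, `ℓ_K = ∑_{k=1}^K 1/k`. -/
theorem by_fdr
    {Ω : Type*} [MeasurableSpace Ω] (μ : Measure Ω) [IsProbabilityMeasure μ]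
    {K : ℕ} (hK : 0 < K) {α : ℝ} (hα : α ∈ Set.Ioo (0 : ℝ) 1)
    (P : Fin K → Ω → ℝ) (hP : ∀ k, Measurable (P k)) (N : Finset (Fin K))
    (h_pvar : ∀ k ∈ N, ∀ x ∈ Set.Ioo (0 : ℝ) 1, μ {ω | P k ω ≤ x} ≤ ENNReal.ofReal x) :
    ∫ ω, fdp (bhRejects K α (fun k => P k ω)) N ∂μ ≤ harm K * α * N.card / K :=
  by_fdr_general μ hα P hP N h_pvar
end

section
/- The function φ(p) = (K/(α' · ⌈Kp/α⌉))·1{p ≤ α} (with φ(0) = K/α'), where α' = α·ℓ_K and ℓ_K = Σ_{k=1}^K 1/k, satisfies ∫₀¹ φ(p) dp = 1; consequently, if P is a p-variable then E[φ(P)] ≤ 1, i.e., φ(P) is an e-variable. -/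
open MeasureTheory ProbabilityTheory Finset
open scoped ENNReal Classical

/-- The p-to-e calibrator `φ(p) = (K/(α' ⌈Kp/α⌉)) 1_{p ≤ α}`, `φ(0) = K/α'`,
where `α' = α ℓ_K`. -/
noncomputable def phi (K : ℕ) (α : ℝ) (p : ℝ) : ℝ :=
  if p = 0 then (K : ℝ) / (α * harm K)
  else if p ≤ α then (K : ℝ) / (α * harm K * (⌈(K : ℝ) * p / α⌉ : ℤ)) else 0

/-! On `[0, ∞)` the calibrator is a staircase, `φ = ∑_{j=1}^K d_j 1_{p ≤ α j / K}`, where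
`d_j ≥ 0` is the drop of `φ` at `α j / K`. The `j`-th step contributes exactly `d_j α j / K` to
`∫₀¹ φ` and, as `P(P ≤ α j / K) ≤ α j / K`, at most that much to `E[φ(P)]`. Summation by parts
turns `∑_j d_j α j / K` into `(α / K) ∑_j K / (α ℓ_K j) = 1`. -/

namespace Finset

variable {M : Type*} [AddCommGroup M]

theorem sum_Icc_ite_le_sub_succ {c : ℕ → M} {K n : ℕ} (hc : ∀ j, K < j → c j = 0)
    (hn : 1 ≤ n) :
    ∑ j ∈ Icc 1 K, (if n ≤ j then c j - c (j + 1) else 0) = c n := by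
  rw [← sum_filter, show (Icc 1 K).filter (n ≤ ·) = Icc n K by ext; simp; omega]
  rcases le_or_gt n K with hnK | hKn
  · calc ∑ j ∈ Icc n K, (c j - c (j + 1))
        = -∑ j ∈ Icc n K, (c (j + 1) - c j) := by simp only [← sum_neg_distrib, neg_sub]
      _ = c n := by simp [sum_Icc_sub hnK, hc (K + 1) (by omega)]
  · rw [Icc_eq_empty (by omega), sum_empty, hc n hKn]

theorem sum_Icc_nsmul_sub_succ (c : ℕ → M) (n : ℕ) :
    ∑ j ∈ Icc 1 n, j • (c j - c (j + 1)) = ∑ j ∈ Icc 1 n, c j - n • c (n + 1) := by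
  induction n with
  | zero => simp
  | succ n ih =>
    rw [sum_Icc_succ_top (by omega), ih, sum_Icc_succ_top (by omega)]
    simp only [succ_nsmul, nsmul_sub]
    abel

end Finset

section Staircase

variable {ι : Type*} {s : Finset ι} {w t : ι → ℝ}

theorem intervalIntegral_sum_indicator_Iic (ht : ∀ i ∈ s, t i ∈ Set.Icc (0 : ℝ) 1) :
    ∫ p in (0 : ℝ)..1, ∑ i ∈ s, (Set.Iic (t i)).indicator (fun _ => w i) p
      = ∑ i ∈ s, w i * t i := by
  rw [intervalIntegral.integral_finsetSum]
  · refine sum_congr rfl fun i hi => ?_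
    rw [← Set.Iic_def, intervalIntegral.integral_indicator (ht i hi)]
    simp [mul_comm]
  · intro i _
    exact intervalIntegrable_iff.2
      ((intervalIntegrable_iff.1 intervalIntegrable_const).indicator measurableSet_Iic)

variable {Ω : Type*} [MeasurableSpace Ω] {μ : Measure Ω} {P : Ω → ℝ}

theorem integral_sum_indicator_Iic_comp_le (hP : Measurable P) (hw : ∀ i ∈ s, 0 ≤ w i)
    (ht : ∀ i ∈ s, 0 ≤ t i) (hPt : ∀ i ∈ s, μ {ω | P ω ≤ t i} ≤ ENNReal.ofReal (t i)) :
    ∫ ω, ∑ i ∈ s, (Set.Iic (t i)).indicator (fun _ => w i) (P ω) ∂μ ≤ ∑ i ∈ s, w i * t i := by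
  have hcomp (i : ι) : (fun ω => (Set.Iic (t i)).indicator (fun _ => w i) (P ω))
      = {ω | P ω ≤ t i}.indicator (fun _ => w i) := by
    ext ω; simp [Set.indicator_apply]
  have hfin (i : ι) (hi : i ∈ s) : μ {ω | P ω ≤ t i} ≠ ⊤ :=
    ((hPt i hi).trans_lt ENNReal.ofReal_lt_top).ne
  have hmeas (i : ι) : MeasurableSet {ω | P ω ≤ t i} := hP measurableSet_Iic
  rw [integral_finsetSum]
  · refine sum_le_sum fun i hi => ?_
    rw [hcomp, integral_indicator_const _ (hmeas i), smul_eq_mul, mul_comm]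
    exact mul_le_mul_of_nonneg_left (ENNReal.toReal_le_of_le_ofReal (ht i hi) (hPt i hi)) (hw i hi)
  · intro i hi
    rw [hcomp]
    exact (integrable_indicator_iff (hmeas i)).2 (integrableOn_const (hfin i hi))

end Staircase

theorem harm_pos {K : ℕ} (hK : 0 < K) : 0 < harm K :=
  sum_pos (fun k hk => by have : 0 < k := (mem_Icc.1 hk).1; positivity) ⟨1, mem_Icc.2 ⟨le_rfl, hK⟩⟩

/-- `K / (α' j)`, the value of `phi` on `(α (j - 1) / K, α j / K]`; zero for `j > K`. -/
noncomputable def phiLevel (K : ℕ) (α : ℝ) (j : ℕ) : ℝ :=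
  if j ≤ K then K / (α * harm K * j) else 0

theorem phiLevel_succ_le {K : ℕ} {α : ℝ} (hα : 0 < α) {j : ℕ} (hj : 1 ≤ j) :
    phiLevel K α (j + 1) ≤ phiLevel K α j := by
  unfold phiLevel
  split_ifs with h₁ h₂
  · have := harm_pos (K := K) (by omega)
    gcongr
    omega
  · omega
  · have := harm_pos (K := K) (by omega)
    positivity
  · rfl

theorem phi_eq_phiLevel {K : ℕ} (hK : 0 < K) {α : ℝ} (hα : 0 < α) {p : ℝ} (hp : 0 ≤ p) :
    phi K α p = phiLevel K α (max 1 ⌈K * p / α⌉₊) := by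
  have hx : 0 ≤ (K : ℝ) * p / α := by positivity
  unfold phi phiLevel
  rcases hp.eq_or_lt with rfl | hp
  · simp [show 1 ≤ K from hK]
  · have hceil : 1 ≤ ⌈(K : ℝ) * p / α⌉₊ := Nat.one_le_iff_ne_zero.2 (by positivity)
    have hle : p ≤ α ↔ ⌈(K : ℝ) * p / α⌉₊ ≤ K := by
      rw [Nat.ceil_le, div_le_iff₀ hα, mul_le_mul_iff_of_pos_left (by positivity)]
    simp only [hp.ne', if_false, max_eq_right hceil, hle, ← natCast_ceil_eq_intCast_ceil hx]

theorem phi_eq_sum_indicator {K : ℕ} (hK : 0 < K) {α : ℝ} (hα : 0 < α) {p : ℝ} (hp : 0 ≤ p) :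
    phi K α p = ∑ j ∈ Icc 1 K,
      (Set.Iic (α * j / K)).indicator (fun _ => phiLevel K α j - phiLevel K α (j + 1)) p := by
  rw [phi_eq_phiLevel hK hα hp,
    ← sum_Icc_ite_le_sub_succ (c := phiLevel K α) (fun j hj => if_neg hj.not_ge) (le_max_left _ _)]
  refine sum_congr rfl fun j hj => ?_
  have hj : 1 ≤ j := (mem_Icc.1 hj).1
  have hiff : max 1 ⌈K * p / α⌉₊ ≤ j ↔ p ≤ α * j / K := by
    rw [max_le_iff, Nat.ceil_le, div_le_iff₀ hα, le_div_iff₀ (by positivity), mul_comm p,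
      mul_comm (j : ℝ)]
    simp [hj]
  simp only [Set.indicator_apply, Set.mem_Iic, hiff]

theorem sum_phiLevel_sub_succ_mul {K : ℕ} (hK : 0 < K) {α : ℝ} (hα : 0 < α) :
    ∑ j ∈ Icc 1 K, (phiLevel K α j - phiLevel K α (j + 1)) * (α * j / K) = 1 := by
  have hℓ := harm_pos hK
  calc ∑ j ∈ Icc 1 K, (phiLevel K α j - phiLevel K α (j + 1)) * (α * j / K)
      = α / K * ∑ j ∈ Icc 1 K, j • (phiLevel K α j - phiLevel K α (j + 1)) := by
        rw [mul_sum]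
        refine sum_congr rfl fun j _ => ?_
        rw [nsmul_eq_mul]
        ring
    _ = α / K * ∑ j ∈ Icc 1 K, K / (α * harm K * j) := by
        rw [sum_Icc_nsmul_sub_succ, phiLevel, if_neg (by omega), smul_zero, sub_zero]
        exact congrArg _ (sum_congr rfl fun j hj => if_pos (mem_Icc.1 hj).2)
    _ = ∑ j ∈ Icc 1 K, (harm K)⁻¹ * (1 / j) := by
        rw [mul_sum]
        refine sum_congr rfl fun j hj => ?_
        have : (0 : ℝ) < j := by exact_mod_cast (mem_Icc.1 hj).1
        field_simp
    _ = 1 := by rw [← mul_sum, ← harm, inv_mul_cancel₀ hℓ.ne']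

/-- `∫₀¹ φ = 1`; consequently if `P` is a p-variable then `φ(P)` is an e-variable:
it is nonnegative with `E[φ(P)] ≤ 1`. -/
theorem phi_integral_one_and_evariable
    {K : ℕ} (hK : 0 < K) {α : ℝ} (hα : α ∈ Set.Ioo (0 : ℝ) 1) :
    (∫ p in (0 : ℝ)..1, phi K α p = 1) ∧
    ∀ {Ω : Type*} [MeasurableSpace Ω] (μ : Measure Ω) [IsProbabilityMeasure μ]
      (P : Ω → ℝ), Measurable P → (∀ ω, 0 ≤ P ω) →
      (∀ x ∈ Set.Ioo (0 : ℝ) 1, μ {ω | P ω ≤ x} ≤ ENNReal.ofReal x) →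
      (∀ ω, 0 ≤ phi K α (P ω)) ∧ ∫ ω, phi K α (P ω) ∂μ ≤ 1 := by
  obtain ⟨hα0, hα1⟩ := hα
  have hjump (j : ℕ) (hj : j ∈ Icc 1 K) : 0 ≤ phiLevel K α j - phiLevel K α (j + 1) :=
    sub_nonneg.2 (phiLevel_succ_le hα0 (mem_Icc.1 hj).1)
  have hstep (j : ℕ) (hj : j ∈ Icc 1 K) : α * j / K ∈ Set.Ioo (0 : ℝ) 1 := by
    obtain ⟨hj1, hjK⟩ := mem_Icc.1 hj
    have : (j : ℝ) / K ≤ 1 := div_le_one_of_le₀ (by exact_mod_cast hjK) (by positivity)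
    exact ⟨by positivity,
      mul_div_assoc α j K ▸ mul_lt_one_of_nonneg_of_lt_one_left hα0.le hα1 this⟩
  refine ⟨?_, fun μ _ P hP hP0 hPval => ⟨fun ω => ?_, ?_⟩⟩
  · rw [intervalIntegral.integral_congr fun p hp => phi_eq_sum_indicator hK hα0 ?_,
      intervalIntegral_sum_indicator_Iic fun j hj => Set.Ioo_subset_Icc_self (hstep j hj),
      sum_phiLevel_sub_succ_mul hK hα0]
    simpa using hp.1
  · rw [phi_eq_sum_indicator hK hα0 (hP0 ω)]
    exact sum_nonneg fun j hj => Set.indicator_nonneg (fun _ _ => hjump j hj) _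
  · simp_rw [phi_eq_sum_indicator hK hα0 (hP0 _)]
    refine (integral_sum_indicator_Iic_comp_le hP hjump (fun j hj => (hstep j hj).1.le)
      fun j hj => hPval _ (hstep j hj)).trans_eq (sum_phiLevel_sub_succ_mul hK hα0)
end
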